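/- arXiv:2012.04092 — 4 statements merged into one kernel-verified Lean document; each statement's English description precedes it below -/
import Mathlib

section
/- CI implication (I:2): let ξ_X, ξ_Y, ξ_Z, ξ_U be discrete random variables with nonempty finite ranges on a common probability space. If ξ_X ⊥ ξ_Y (unconditional independence), ξ_X ⊥ ξ_Z | ξ_U, ξ_Z ⊥ ξ_U | ξ_X, and ξ_Z ⊥ ξ_U | ξ_Y, then ξ_Z ⊥ (ξ_X, ξ_U) (unconditional independence of ξ_Z from the pair (ξ_X, ξ_U)). -/
open MeasureTheory

/-- The probability that the discrete random variable `f` takes the value `x`. -/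
noncomputable def probOf {Ω S : Type*} [MeasurableSpace Ω] (μ : Measure Ω)
    (f : Ω → S) (x : S) : ℝ :=
  (μ {ω | f ω = x}).toReal

/-- The Shannon entropy `−Σ_x p(x)·ln p(x)` of the distribution of a discrete
random variable `f` with finite range `S`. -/
noncomputable def entropyOf {Ω S : Type*} [MeasurableSpace Ω] [Fintype S]
    (μ : Measure Ω) (f : Ω → S) : ℝ :=
  ∑ x : S, Real.negMulLog (probOf μ f x)

/-- Conditional independence of discrete random variables:
`P(f = a, g = b, k = c) · P(k = c) = P(f = a, k = c) · P(g = b, k = c)` for all values. -/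
def CondIndepRV {Ω A B C : Type*} [MeasurableSpace Ω] (μ : Measure Ω)
    (f : Ω → A) (g : Ω → B) (k : Ω → C) : Prop :=
  ∀ (a : A) (b : B) (c : C),
    μ {ω | f ω = a ∧ g ω = b ∧ k ω = c} * μ {ω | k ω = c} =
    μ {ω | f ω = a ∧ k ω = c} * μ {ω | g ω = b ∧ k ω = c}

/-- Unconditional independence: the case of a constant conditioning variable. -/
def IndepRV {Ω A B : Type*} [MeasurableSpace Ω] (μ : Measure Ω)
    (f : Ω → A) (g : Ω → B) : Prop :=
  CondIndepRV μ f g (fun _ => ())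


lemma fiber_sum {Ω S : Type*} [MeasurableSpace Ω] (μ : MeasureTheory.Measure Ω)
    [MeasureTheory.IsProbabilityMeasure μ]
    [Fintype S] [MeasurableSpace S] [MeasurableSingletonClass S]
    {f : Ω → S} (hf : Measurable f) {P : Ω → Prop} (hP : MeasurableSet {ω | P ω}) :
    (μ {ω | P ω}).toReal = ∑ x : S, (μ {ω | f ω = x ∧ P ω}).toReal := by
  have hsets : ∀ x : S, MeasurableSet {ω | f ω = x ∧ P ω} := fun x =>
    (hf (measurableSet_singleton x)).inter hP
  have hU : {ω | P ω} = ⋃ x : S, {ω | f ω = x ∧ P ω} := by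
    ext ω; simp
  have hdisj : Pairwise (Function.onFun Disjoint (fun x : S => {ω | f ω = x ∧ P ω})) := by
    intro x y hxy
    simp only [Function.onFun, Set.disjoint_left]
    rintro ω ⟨rfl, -⟩ ⟨h, -⟩
    exact hxy h
  rw [hU, MeasureTheory.measure_iUnion hdisj hsets, tsum_fintype, ENNReal.toReal_sum]
  intro x _
  exact MeasureTheory.measure_ne_top μ _


lemma sum3_zero {α β γ : Type*} [Fintype α] [Fintype β] [Fintype γ]
    {f : α → β → γ → ℝ} (h0 : ∀ a b c, 0 ≤ f a b c)
    (h : ∑ a, ∑ b, ∑ c, f a b c = 0) : ∀ a b c, f a b c = 0 := by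
  intro a b c
  have h1 : ∑ b, ∑ c, f a b c = 0 := by
    have := (Finset.sum_eq_zero_iff_of_nonneg (fun a _ => Finset.sum_nonneg fun b _ =>
      Finset.sum_nonneg fun c _ => h0 a b c)).mp h
    exact this a (Finset.mem_univ a)
  have h2 : ∑ c, f a b c = 0 := by
    have := (Finset.sum_eq_zero_iff_of_nonneg (fun b _ =>
      Finset.sum_nonneg fun c _ => h0 a b c)).mp h1
    exact this b (Finset.mem_univ b)
  exact (Finset.sum_eq_zero_iff_of_nonneg (fun c _ => h0 a b c)).mp h2 c (Finset.mem_univ c)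

lemma ci_arith {SX SY SZ SU : Type*} [Fintype SX] [Fintype SY] [Fintype SZ] [Fintype SU]
    (q : SX → SY → SZ → SU → ℝ)
    (pX : SX → ℝ) (pY : SY → ℝ) (pZ : SZ → ℝ) (pU : SU → ℝ)
    (pXY : SX → SY → ℝ) (pXU : SX → SU → ℝ) (pZX : SZ → SX → ℝ)
    (pZU : SZ → SU → ℝ) (pZY : SZ → SY → ℝ) (pUY : SU → SY → ℝ)
    (pZXU : SZ → SX → SU → ℝ) (pZUY : SZ → SU → SY → ℝ) (pXUY : SX → SU → SY → ℝ)
    (hq : ∀ x y z u, 0 ≤ q x y z u)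
    (hpX : ∀ x, pX x = ∑ y, ∑ z, ∑ u, q x y z u)
    (hpY : ∀ y, pY y = ∑ x, ∑ z, ∑ u, q x y z u)
    (hpZ : ∀ z, pZ z = ∑ x, ∑ y, ∑ u, q x y z u)
    (hpU : ∀ u, pU u = ∑ x, ∑ y, ∑ z, q x y z u)
    (hpXY : ∀ x y, pXY x y = ∑ z, ∑ u, q x y z u)
    (hpXU : ∀ x u, pXU x u = ∑ y, ∑ z, q x y z u)
    (hpZX : ∀ z x, pZX z x = ∑ y, ∑ u, q x y z u)
    (hpZU : ∀ z u, pZU z u = ∑ x, ∑ y, q x y z u)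
    (hpZY : ∀ z y, pZY z y = ∑ x, ∑ u, q x y z u)
    (hpUY : ∀ u y, pUY u y = ∑ x, ∑ z, q x y z u)
    (hpZXU : ∀ z x u, pZXU z x u = ∑ y, q x y z u)
    (hpZUY : ∀ z u y, pZUY z u y = ∑ x, q x y z u)
    (hpXUY : ∀ x u y, pXUY x u y = ∑ z, q x y z u)
    (htotU : ∑ u, pU u = 1)
    (H1 : ∀ x y, pXY x y = pX x * pY y)
    (H2 : ∀ z x u, pZXU z x u * pU u = pXU x u * pZU z u)
    (H3 : ∀ z x u, pZXU z x u * pX x = pZX z x * pXU x u)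
    (H4 : ∀ z u y, pZUY z u y * pY y = pZY z y * pUY u y) :
    ∀ z x u, pZXU z x u = pZ z * pXU x u := by
  intro z x₀ u₀
  -- zero propagation facts
  have ZX : ∀ x, pX x = 0 → (∀ y z' u, q x y z' u = 0) := by
    intro x hx
    exact sum3_zero (fun y z' u => hq x y z' u) (by rw [← hpX x, hx])
  have ZU : ∀ u, pU u = 0 → (∀ x y z', q x y z' u = 0) := by
    intro u hu
    exact sum3_zero (fun x y z' => hq x y z' u) (by rw [← hpU u, hu])
  have ZY : ∀ y, pY y = 0 → (∀ x z' u, q x y z' u = 0) := by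
    intro y hy
    exact sum3_zero (fun x z' u => hq x y z' u) (by rw [← hpY y, hy])
  have ZXU : ∀ x u, pXU x u = 0 → (∀ y z', q x y z' u = 0) := by
    intro x u hxu y z'
    have h1 : ∑ z', q x y z' u = 0 := by
      have := (Finset.sum_eq_zero_iff_of_nonneg
        (fun y _ => Finset.sum_nonneg (fun z' _ => hq x y z' u))).mp (by rw [← hpXU x u, hxu])
      exact this y (Finset.mem_univ y)
    exact (Finset.sum_eq_zero_iff_of_nonneg (fun z' _ => hq x y z' u)).mp h1 z' (Finset.mem_univ z')
  -- nonnegativity of marginals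
  have hpXU0 : ∀ x u, 0 ≤ pXU x u := fun x u => by
    rw [hpXU]; exact Finset.sum_nonneg fun y _ => Finset.sum_nonneg fun z' _ => hq x y z' u
  have hpU0 : ∀ u, 0 ≤ pU u := fun u => by
    rw [hpU]; exact Finset.sum_nonneg fun x _ => Finset.sum_nonneg fun y _ =>
      Finset.sum_nonneg fun z' _ => hq x y z' u
  have hpX0 : ∀ x, 0 ≤ pX x := fun x => by
    rw [hpX]; exact Finset.sum_nonneg fun y _ => Finset.sum_nonneg fun z' _ =>
      Finset.sum_nonneg fun u _ => hq x y z' u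
  have hpY0 : ∀ y, 0 ≤ pY y := fun y => by
    rw [hpY]; exact Finset.sum_nonneg fun x _ => Finset.sum_nonneg fun z' _ =>
      Finset.sum_nonneg fun u _ => hq x y z' u
  -- implications among marginal zeros
  have hXzero : ∀ x u, pX x = 0 → pXU x u = 0 := by
    intro x u hx; rw [hpXU]; exact Finset.sum_eq_zero fun y _ => Finset.sum_eq_zero fun z' _ => ZX x hx y z' u
  have hUzero : ∀ x u, pU u = 0 → pXU x u = 0 := by
    intro x u hu; rw [hpXU]; exact Finset.sum_eq_zero fun y _ => Finset.sum_eq_zero fun z' _ => ZU u hu x y z'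
  have hUzeroZ : ∀ u, pU u = 0 → pZU z u = 0 := by
    intro u hu; rw [hpZU]; exact Finset.sum_eq_zero fun x _ => Finset.sum_eq_zero fun y _ => ZU u hu x y z
  have hXzeroZ : ∀ x, pX x = 0 → pZX z x = 0 := by
    intro x hx; rw [hpZX]; exact Finset.sum_eq_zero fun y _ => Finset.sum_eq_zero fun u _ => ZX x hx y z u
  have hXUzero : ∀ x u, pXU x u = 0 → pZXU z x u = 0 := by
    intro x u h; rw [hpZXU]; exact Finset.sum_eq_zero fun y _ => ZXU x u h y z
  have hXUzeroY : ∀ x u y, pXU x u = 0 → pXUY x u y = 0 := by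
    intro x u y h; rw [hpXUY]; exact Finset.sum_eq_zero fun z' _ => ZXU x u h y z'
  have hYzeroUY : ∀ u y, pY y = 0 → pUY u y = 0 := by
    intro u y hy; rw [hpUY]; exact Finset.sum_eq_zero fun x _ => Finset.sum_eq_zero fun z' _ => ZY y hy x z' u
  have hYzeroZY : ∀ y, pY y = 0 → pZY z y = 0 := by
    intro y hy; rw [hpZY]; exact Finset.sum_eq_zero fun x _ => Finset.sum_eq_zero fun u _ => ZY y hy x z u
  have hYzeroZUY : ∀ u y, pY y = 0 → pZUY z u y = 0 := by
    intro u y hy; rw [hpZUY]; exact Finset.sum_eq_zero fun x _ => ZY y hy x z u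
  -- conditional probability functions
  set a : SX → ℝ := fun x => if pX x = 0 then 0 else pZX z x / pX x with ha
  set b : SU → ℝ := fun u => if pU u = 0 then 0 else pZU z u / pU u with hb
  set c : SY → ℝ := fun y => if pY y = 0 then 0 else pZY z y / pY y with hc
  have fa : ∀ x, pZX z x = a x * pX x := by
    intro x; by_cases h : pX x = 0
    · simp [ha, h, hXzeroZ x h]
    · simp [ha, h]
  have fb : ∀ u, pZU z u = b u * pU u := by
    intro u; by_cases h : pU u = 0
    · simp [hb, h, hUzeroZ u h]
    · simp [hb, h]
  have fc : ∀ y, pZY z y = c y * pY y := by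
    intro y; by_cases h : pY y = 0
    · simp [hc, h, hYzeroZY y h]
    · simp [hc, h]
  -- K1 : on the support of pXU, a x = b u
  have K1 : ∀ x u, pXU x u ≠ 0 → a x = b u := by
    intro x u hxu
    have hx : pX x ≠ 0 := fun h => hxu (hXzero x u h)
    have hu : pU u ≠ 0 := fun h => hxu (hUzero x u h)
    have E1 : pZX z x * pXU x u * pU u = pZU z u * pXU x u * pX x := by
      linear_combination pX x * H2 z x u - pU u * H3 z x u
    have E2 : pZX z x * pU u = pZU z u * pX x := by
      have := mul_right_cancel₀ hxu (by linear_combination E1 :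
        (pZX z x * pU u) * pXU x u = (pZU z u * pX x) * pXU x u)
      exact this
    simp only [ha, hb, hx, hu, if_false]
    rw [div_eq_div_iff hx hu]
    exact E2
  -- marginal chain identities
  have S1 : ∑ u, pZU z u = pZ z := by
    calc ∑ u, pZU z u = ∑ u, ∑ x, ∑ y, q x y z u := by simp only [hpZU]
      _ = ∑ x, ∑ u, ∑ y, q x y z u := Finset.sum_comm
      _ = ∑ x, ∑ y, ∑ u, q x y z u := Finset.sum_congr rfl fun x _ => Finset.sum_comm
      _ = pZ z := (hpZ z).symm
  have S2 : ∑ x, pZX z x = pZ z := by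
    simp only [hpZX]; exact (hpZ z).symm
  have S3 : ∑ y, pZY z y = pZ z := by
    calc ∑ y, pZY z y = ∑ y, ∑ x, ∑ u, q x y z u := by simp only [hpZY]
      _ = ∑ x, ∑ y, ∑ u, q x y z u := Finset.sum_comm
      _ = pZ z := (hpZ z).symm
  have S8 : ∀ u, pZU z u = ∑ y, pZUY z u y := by
    intro u; simp only [hpZU, hpZUY]; exact Finset.sum_comm
  have S5 : ∀ x y, pXY x y = ∑ u, pXUY x u y := by
    intro x y; simp only [hpXY, hpXUY]; exact Finset.sum_comm
  have S6 : ∀ u y, pUY u y = ∑ x, pXUY x u y := by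
    intro u y; simp only [hpUY, hpXUY]
  have Ksum_a : ∑ x, a x * pX x = pZ z := by
    rw [Finset.sum_congr rfl fun x _ => (fa x).symm]; exact S2
  have K2 : ∀ x u, pZXU z x u = a x * pXU x u := by
    intro x u
    by_cases h : pX x = 0
    · rw [hXUzero x u (hXzero x u h), hXzero x u h, mul_zero]
    · simp only [ha, if_neg h]
      field_simp
      linear_combination H3 z x u
  have K2c : ∀ u y, pZUY z u y = c y * pUY u y := by
    intro u y
    by_cases h : pY y = 0
    · rw [hYzeroZUY u y h, hYzeroUY u y h, mul_zero]
    · simp only [hc, if_neg h]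
      field_simp
      linear_combination H4 z u y
  have K3 : ∀ y, ∑ u, b u * pUY u y = pZ z * pY y := by
    intro y
    calc ∑ u, b u * pUY u y = ∑ u, ∑ x, b u * pXUY x u y := by
          refine Finset.sum_congr rfl fun u _ => ?_
          rw [S6 u y, Finset.mul_sum]
      _ = ∑ u, ∑ x, a x * pXUY x u y := by
          refine Finset.sum_congr rfl fun u _ => Finset.sum_congr rfl fun x _ => ?_
          by_cases h : pXUY x u y = 0
          · rw [h, mul_zero, mul_zero]
          · rw [K1 x u (fun hh => h (hXUzeroY x u y hh))]
      _ = ∑ x, ∑ u, a x * pXUY x u y := Finset.sum_comm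
      _ = ∑ x, a x * pXY x y := by
          refine Finset.sum_congr rfl fun x _ => ?_
          rw [S5 x y, Finset.mul_sum]
      _ = ∑ x, a x * pX x * pY y := by
          refine Finset.sum_congr rfl fun x _ => ?_
          rw [H1 x y]; ring
      _ = (∑ x, a x * pX x) * pY y := (Finset.sum_mul _ _ _).symm
      _ = pZ z * pY y := by rw [Ksum_a]
  have K5 : ∑ u, b u * pZU z u = ∑ u, b u ^ 2 * pU u := by
    refine Finset.sum_congr rfl fun u _ => ?_
    rw [fb u]; ring
  have K6 : ∑ u, b u * pZU z u = pZ z * pZ z := by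
    calc ∑ u, b u * pZU z u = ∑ u, ∑ y, b u * pZUY z u y := by
          refine Finset.sum_congr rfl fun u _ => ?_
          rw [S8 u, Finset.mul_sum]
      _ = ∑ u, ∑ y, b u * (c y * pUY u y) := by
          refine Finset.sum_congr rfl fun u _ => Finset.sum_congr rfl fun y _ => ?_
          rw [K2c u y]
      _ = ∑ y, ∑ u, b u * (c y * pUY u y) := Finset.sum_comm
      _ = ∑ y, c y * ∑ u, b u * pUY u y := by
          refine Finset.sum_congr rfl fun y _ => ?_
          rw [Finset.mul_sum]
          exact Finset.sum_congr rfl fun u _ => by ring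
      _ = ∑ y, c y * (pZ z * pY y) := by
          refine Finset.sum_congr rfl fun y _ => ?_
          rw [K3 y]
      _ = pZ z * ∑ y, pZY z y := by
          rw [Finset.mul_sum]
          refine Finset.sum_congr rfl fun y _ => ?_
          rw [fc y]; ring
      _ = pZ z * pZ z := by rw [S3]
  have Kmean : ∑ u, b u * pU u = pZ z := by
    rw [Finset.sum_congr rfl fun u _ => (fb u).symm]; exact S1
  have Kvar : ∑ u, pU u * (b u - pZ z) ^ 2 = 0 := by
    calc ∑ u, pU u * (b u - pZ z) ^ 2
        = (∑ u, b u ^ 2 * pU u) - 2 * pZ z * (∑ u, b u * pU u) + pZ z ^ 2 * (∑ u, pU u) := by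
          rw [Finset.sum_congr rfl (fun u _ => by ring :
            ∀ u ∈ Finset.univ, pU u * (b u - pZ z) ^ 2
              = b u ^ 2 * pU u - 2 * pZ z * (b u * pU u) + pZ z ^ 2 * pU u),
            Finset.sum_add_distrib, Finset.sum_sub_distrib, ← Finset.mul_sum, ← Finset.mul_sum]
      _ = 0 := by rw [← K5, K6, Kmean, htotU]; ring
  have Kb : ∀ u, pU u ≠ 0 → b u = pZ z := by
    intro u hu
    have h := (Finset.sum_eq_zero_iff_of_nonneg
      (fun u _ => mul_nonneg (hpU0 u) (sq_nonneg _))).mp Kvar u (Finset.mem_univ u)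
    rcases mul_eq_zero.mp h with h' | h'
    · exact absurd h' hu
    · have := pow_eq_zero_iff (n := 2) (by norm_num) |>.mp h'
      linarith [this]
  -- conclusion
  by_cases h : pXU x₀ u₀ = 0
  · rw [hXUzero x₀ u₀ h, h, mul_zero]
  · have hu : pU u₀ ≠ 0 := fun hh => h (hUzero x₀ u₀ hh)
    rw [K2 x₀ u₀, K1 x₀ u₀ h, Kb u₀ hu]


/-- Statement: the CI implication (I:2) for four discrete random variables. -/
theorem ci_implication_I2
    {Ω : Type*} [MeasurableSpace Ω] (μ : Measure Ω) [IsProbabilityMeasure μ]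
    {SX SY SZ SU : Type*}
    [Fintype SX] [Nonempty SX] [MeasurableSpace SX] [MeasurableSingletonClass SX]
    [Fintype SY] [Nonempty SY] [MeasurableSpace SY] [MeasurableSingletonClass SY]
    [Fintype SZ] [Nonempty SZ] [MeasurableSpace SZ] [MeasurableSingletonClass SZ]
    [Fintype SU] [Nonempty SU] [MeasurableSpace SU] [MeasurableSingletonClass SU]
    (ξX : Ω → SX) (ξY : Ω → SY) (ξZ : Ω → SZ) (ξU : Ω → SU)
    (mX : Measurable ξX) (mY : Measurable ξY) (mZ : Measurable ξZ) (mU : Measurable ξU)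
    (h1 : IndepRV μ ξX ξY) (h2 : CondIndepRV μ ξX ξZ ξU) (h3 : CondIndepRV μ ξZ ξU ξX) (h4 : CondIndepRV μ ξZ ξU ξY) :
    IndepRV μ ξZ (fun ω => (ξX ω, ξU ω)) := by
  have qcongr : ∀ {s t : Set Ω}, s = t → (μ s).toReal = (μ t).toReal := fun h => by rw [h]
  have msX : ∀ x, MeasurableSet {ω | ξX ω = x} := fun x => mX (measurableSet_singleton x)
  have msY : ∀ y, MeasurableSet {ω | ξY ω = y} := fun y => mY (measurableSet_singleton y)
  have msZ : ∀ z, MeasurableSet {ω | ξZ ω = z} := fun z => mZ (measurableSet_singleton z)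
  have msU : ∀ u, MeasurableSet {ω | ξU ω = u} := fun u => mU (measurableSet_singleton u)
  have msAnd : ∀ {P Q : Ω → Prop}, MeasurableSet {ω | P ω} → MeasurableSet {ω | Q ω} →
      MeasurableSet {ω | P ω ∧ Q ω} := fun hP hQ => hP.inter hQ
  have key : ∀ z x u, (μ {ω | ξZ ω = z ∧ ξX ω = x ∧ ξU ω = u}).toReal
      = (μ {ω | ξZ ω = z}).toReal * (μ {ω | ξX ω = x ∧ ξU ω = u}).toReal := by
    refine ci_arith
      (fun x y z u => (μ {ω | ξX ω = x ∧ ξY ω = y ∧ ξZ ω = z ∧ ξU ω = u}).toReal)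
      (fun x => (μ {ω | ξX ω = x}).toReal)
      (fun y => (μ {ω | ξY ω = y}).toReal)
      (fun z => (μ {ω | ξZ ω = z}).toReal)
      (fun u => (μ {ω | ξU ω = u}).toReal)
      (fun x y => (μ {ω | ξX ω = x ∧ ξY ω = y}).toReal)
      (fun x u => (μ {ω | ξX ω = x ∧ ξU ω = u}).toReal)
      (fun z x => (μ {ω | ξZ ω = z ∧ ξX ω = x}).toReal)
      (fun z u => (μ {ω | ξZ ω = z ∧ ξU ω = u}).toReal)
      (fun z y => (μ {ω | ξZ ω = z ∧ ξY ω = y}).toReal)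
      (fun u y => (μ {ω | ξU ω = u ∧ ξY ω = y}).toReal)
      (fun z x u => (μ {ω | ξZ ω = z ∧ ξX ω = x ∧ ξU ω = u}).toReal)
      (fun z u y => (μ {ω | ξZ ω = z ∧ ξU ω = u ∧ ξY ω = y}).toReal)
      (fun x u y => (μ {ω | ξX ω = x ∧ ξU ω = u ∧ ξY ω = y}).toReal)
      ?hq ?hpX ?hpY ?hpZ ?hpU ?hpXY ?hpXU ?hpZX ?hpZU ?hpZY ?hpUY ?hpZXU ?hpZUY ?hpXUY
      ?htotU ?H1 ?H2 ?H3 ?H4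
    case hq => intro x y zz u; exact ENNReal.toReal_nonneg
    case hpX =>
      intro x
      rw [fiber_sum μ mY (msX x)]
      refine Finset.sum_congr rfl fun y _ => ?_
      rw [fiber_sum μ mZ (msAnd (msY y) (msX x))]
      refine Finset.sum_congr rfl fun zz _ => ?_
      rw [fiber_sum μ mU (msAnd (msZ zz) (msAnd (msY y) (msX x)))]
      refine Finset.sum_congr rfl fun u _ => ?_
      exact qcongr (by ext ω; simp only [Set.mem_setOf_eq]; tauto)
    case hpY =>
      intro y
      rw [fiber_sum μ mX (msY y)]
      refine Finset.sum_congr rfl fun x _ => ?_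
      rw [fiber_sum μ mZ (msAnd (msX x) (msY y))]
      refine Finset.sum_congr rfl fun zz _ => ?_
      rw [fiber_sum μ mU (msAnd (msZ zz) (msAnd (msX x) (msY y)))]
      refine Finset.sum_congr rfl fun u _ => ?_
      exact qcongr (by ext ω; simp only [Set.mem_setOf_eq]; tauto)
    case hpZ =>
      intro zz
      rw [fiber_sum μ mX (msZ zz)]
      refine Finset.sum_congr rfl fun x _ => ?_
      rw [fiber_sum μ mY (msAnd (msX x) (msZ zz))]
      refine Finset.sum_congr rfl fun y _ => ?_
      rw [fiber_sum μ mU (msAnd (msY y) (msAnd (msX x) (msZ zz)))]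
      refine Finset.sum_congr rfl fun u _ => ?_
      exact qcongr (by ext ω; simp only [Set.mem_setOf_eq]; tauto)
    case hpU =>
      intro u
      rw [fiber_sum μ mX (msU u)]
      refine Finset.sum_congr rfl fun x _ => ?_
      rw [fiber_sum μ mY (msAnd (msX x) (msU u))]
      refine Finset.sum_congr rfl fun y _ => ?_
      rw [fiber_sum μ mZ (msAnd (msY y) (msAnd (msX x) (msU u)))]
      refine Finset.sum_congr rfl fun zz _ => ?_
      exact qcongr (by ext ω; simp only [Set.mem_setOf_eq]; tauto)
    case hpXY =>
      intro x y
      rw [fiber_sum μ mZ (msAnd (msX x) (msY y))]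
      refine Finset.sum_congr rfl fun zz _ => ?_
      rw [fiber_sum μ mU (msAnd (msZ zz) (msAnd (msX x) (msY y)))]
      refine Finset.sum_congr rfl fun u _ => ?_
      exact qcongr (by ext ω; simp only [Set.mem_setOf_eq]; tauto)
    case hpXU =>
      intro x u
      rw [fiber_sum μ mY (msAnd (msX x) (msU u))]
      refine Finset.sum_congr rfl fun y _ => ?_
      rw [fiber_sum μ mZ (msAnd (msY y) (msAnd (msX x) (msU u)))]
      refine Finset.sum_congr rfl fun zz _ => ?_
      exact qcongr (by ext ω; simp only [Set.mem_setOf_eq]; tauto)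
    case hpZX =>
      intro zz x
      rw [fiber_sum μ mY (msAnd (msZ zz) (msX x))]
      refine Finset.sum_congr rfl fun y _ => ?_
      rw [fiber_sum μ mU (msAnd (msY y) (msAnd (msZ zz) (msX x)))]
      refine Finset.sum_congr rfl fun u _ => ?_
      exact qcongr (by ext ω; simp only [Set.mem_setOf_eq]; tauto)
    case hpZU =>
      intro zz u
      rw [fiber_sum μ mX (msAnd (msZ zz) (msU u))]
      refine Finset.sum_congr rfl fun x _ => ?_
      rw [fiber_sum μ mY (msAnd (msX x) (msAnd (msZ zz) (msU u)))]
      refine Finset.sum_congr rfl fun y _ => ?_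
      exact qcongr (by ext ω; simp only [Set.mem_setOf_eq]; tauto)
    case hpZY =>
      intro zz y
      rw [fiber_sum μ mX (msAnd (msZ zz) (msY y))]
      refine Finset.sum_congr rfl fun x _ => ?_
      rw [fiber_sum μ mU (msAnd (msX x) (msAnd (msZ zz) (msY y)))]
      refine Finset.sum_congr rfl fun u _ => ?_
      exact qcongr (by ext ω; simp only [Set.mem_setOf_eq]; tauto)
    case hpUY =>
      intro u y
      rw [fiber_sum μ mX (msAnd (msU u) (msY y))]
      refine Finset.sum_congr rfl fun x _ => ?_
      rw [fiber_sum μ mZ (msAnd (msX x) (msAnd (msU u) (msY y)))]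
      refine Finset.sum_congr rfl fun zz _ => ?_
      exact qcongr (by ext ω; simp only [Set.mem_setOf_eq]; tauto)
    case hpZXU =>
      intro zz x u
      rw [fiber_sum μ mY (msAnd (msZ zz) (msAnd (msX x) (msU u)))]
      refine Finset.sum_congr rfl fun y _ => ?_
      exact qcongr (by ext ω; simp only [Set.mem_setOf_eq]; tauto)
    case hpZUY =>
      intro zz u y
      rw [fiber_sum μ mX (msAnd (msZ zz) (msAnd (msU u) (msY y)))]
      refine Finset.sum_congr rfl fun x _ => ?_
      exact qcongr (by ext ω; simp only [Set.mem_setOf_eq]; tauto)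
    case hpXUY =>
      intro x u y
      rw [fiber_sum μ mZ (msAnd (msX x) (msAnd (msU u) (msY y)))]
      refine Finset.sum_congr rfl fun zz _ => ?_
      exact qcongr (by ext ω; simp only [Set.mem_setOf_eq]; tauto)
    case htotU =>
      have ht1 : (μ {ω : Ω | True}).toReal = ∑ u, (μ {ω | ξU ω = u ∧ True}).toReal :=
        fiber_sum μ mU MeasurableSet.univ
      have ht2 : (μ {ω : Ω | True}).toReal = 1 := by
        rw [Set.setOf_true]; simp
      rw [← ht2, ht1]
      exact Finset.sum_congr rfl fun u _ => qcongr (by ext ω; simp)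
    case H1 =>
      intro x y
      have h := h1 x y ()
      have e1 : {ω | ξX ω = x ∧ ξY ω = y ∧ (fun _ => ()) ω = ()} = {ω | ξX ω = x ∧ ξY ω = y} := by
        ext ω; simp
      have e2 : {ω : Ω | (fun _ => ()) ω = ()} = Set.univ := by ext ω; simp
      have e3 : {ω | ξX ω = x ∧ (fun _ => ()) ω = ()} = {ω | ξX ω = x} := by ext ω; simp
      have e4 : {ω | ξY ω = y ∧ (fun _ => ()) ω = ()} = {ω | ξY ω = y} := by ext ω; simp
      rw [e1, e2, e3, e4, measure_univ, mul_one] at h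
      calc (μ {ω | ξX ω = x ∧ ξY ω = y}).toReal
          = (μ {ω | ξX ω = x} * μ {ω | ξY ω = y}).toReal := by rw [h]
        _ = _ := ENNReal.toReal_mul
    case H2 =>
      intro zz x u
      have h := h2 x zz u
      have e1 : {ω | ξX ω = x ∧ ξZ ω = zz ∧ ξU ω = u} = {ω | ξZ ω = zz ∧ ξX ω = x ∧ ξU ω = u} := by
        ext ω; simp only [Set.mem_setOf_eq]; tauto
      rw [e1] at h
      calc (μ {ω | ξZ ω = zz ∧ ξX ω = x ∧ ξU ω = u}).toReal * (μ {ω | ξU ω = u}).toReal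
          = (μ {ω | ξZ ω = zz ∧ ξX ω = x ∧ ξU ω = u} * μ {ω | ξU ω = u}).toReal :=
            ENNReal.toReal_mul.symm
        _ = (μ {ω | ξX ω = x ∧ ξU ω = u} * μ {ω | ξZ ω = zz ∧ ξU ω = u}).toReal := by rw [h]
        _ = _ := ENNReal.toReal_mul
    case H3 =>
      intro zz x u
      have h := h3 zz u x
      have e1 : {ω | ξZ ω = zz ∧ ξU ω = u ∧ ξX ω = x} = {ω | ξZ ω = zz ∧ ξX ω = x ∧ ξU ω = u} := by
        ext ω; simp only [Set.mem_setOf_eq]; tauto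
      have e2 : {ω | ξU ω = u ∧ ξX ω = x} = {ω | ξX ω = x ∧ ξU ω = u} := by ext ω; simp only [Set.mem_setOf_eq]; tauto
      rw [e1, e2] at h
      calc (μ {ω | ξZ ω = zz ∧ ξX ω = x ∧ ξU ω = u}).toReal * (μ {ω | ξX ω = x}).toReal
          = (μ {ω | ξZ ω = zz ∧ ξX ω = x ∧ ξU ω = u} * μ {ω | ξX ω = x}).toReal :=
            ENNReal.toReal_mul.symm
        _ = (μ {ω | ξZ ω = zz ∧ ξX ω = x} * μ {ω | ξX ω = x ∧ ξU ω = u}).toReal := by rw [h]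
        _ = _ := ENNReal.toReal_mul
    case H4 =>
      intro zz u y
      have h := h4 zz u y
      calc (μ {ω | ξZ ω = zz ∧ ξU ω = u ∧ ξY ω = y}).toReal * (μ {ω | ξY ω = y}).toReal
          = (μ {ω | ξZ ω = zz ∧ ξU ω = u ∧ ξY ω = y} * μ {ω | ξY ω = y}).toReal :=
            ENNReal.toReal_mul.symm
        _ = (μ {ω | ξZ ω = zz ∧ ξY ω = y} * μ {ω | ξU ω = u ∧ ξY ω = y}).toReal := by rw [h]
        _ = _ := ENNReal.toReal_mul
  intro z0 xu c
  obtain ⟨x0, u0⟩ := xu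
  have e1 : {ω | ξZ ω = z0 ∧ (fun ω => (ξX ω, ξU ω)) ω = (x0, u0) ∧ (fun _ => ()) ω = c}
      = {ω | ξZ ω = z0 ∧ ξX ω = x0 ∧ ξU ω = u0} := by
    ext ω; simp [Prod.ext_iff]
  have e2 : {ω : Ω | (fun _ => ()) ω = c} = Set.univ := by ext ω; simp
  have e3 : {ω | ξZ ω = z0 ∧ (fun _ => ()) ω = c} = {ω | ξZ ω = z0} := by ext ω; simp
  have e4 : {ω | (fun ω => (ξX ω, ξU ω)) ω = (x0, u0) ∧ (fun _ => ()) ω = c}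
      = {ω | ξX ω = x0 ∧ ξU ω = u0} := by
    ext ω; simp [Prod.ext_iff]
  rw [e1, e2, e3, e4, measure_univ, mul_one]
  rw [← ENNReal.toReal_eq_toReal_iff' (measure_ne_top μ _)
    (ENNReal.mul_ne_top (measure_ne_top μ _) (measure_ne_top μ _)), ENNReal.toReal_mul]
  exact key z0 x0 u0
end

section
/- CI implication (I:13): let ξ_X, ξ_Y, ξ_Z, ξ_U be discrete random variables with nonempty finite ranges on a common probability space. If ξ_X ⊥ ξ_Y (unconditional independence), ξ_X ⊥ ξ_Y | ξ_Z, ξ_X ⊥ ξ_Y | ξ_U, and ξ_Z ⊥ ξ_U | (ξ_X, ξ_Y), then ξ_X ⊥ ξ_Y | (ξ_Z, ξ_U). -/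
open MeasureTheory

/-!
Fix `(z, u)` and let `t x y = P(X = x, Y = y, Z = z, U = u)`. Chaining the four hypotheses gives
`t x y · P(x) P(y) P(z) P(u) = (P(x, z) P(x, u)) · (P(y, z) P(y, u))`, so `t` is a product
`α x · β y` (where a factor on the left vanishes, `t` vanishes too, being dominated by a null
event). For a product table, `t x y · Σ t = (Σ_y' t x y') · (Σ_x' t x' y)`, and the three sums are
the marginals appearing in the conclusion.
-/

open Finset

section Algebra

variable {R ι κ : Type*} [CommSemiring R] [Fintype ι] [Fintype κ]

theorem mul_sum_sum_eq_sum_mul_sum_of_eq_mul {t : ι → κ → R} {α : ι → R} {β : κ → R}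
    (ht : ∀ i j, t i j = α i * β j) (i : ι) (j : κ) :
    t i j * ∑ i', ∑ j', t i' j' = (∑ j', t i j') * ∑ i', t i' j := by
  simp only [ht, ← mul_sum, ← sum_mul]
  ring

end Algebra

theorem eq_div_mul_div_of_mul_mul_eq {t p q a b : ℝ} (h : t * (p * q) = a * b)
    (h0 : p = 0 ∨ q = 0 → t = 0) : t = a / p * (b / q) := by
  by_cases hp : p = 0
  · simp [h0 (.inl hp), hp]
  by_cases hq : q = 0
  · simp [h0 (.inr hq), hq]
  field_simp
  linarith

section Probability

variable {Ω A B C D : Type*} [MeasurableSpace Ω] {μ : Measure Ω}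

theorem condIndepRV_iff_measureReal [IsFiniteMeasure μ] {f : Ω → A} {g : Ω → B} {k : Ω → C} :
    CondIndepRV μ f g k ↔ ∀ a b c,
      μ.real {ω | f ω = a ∧ g ω = b ∧ k ω = c} * μ.real {ω | k ω = c} =
        μ.real {ω | f ω = a ∧ k ω = c} * μ.real {ω | g ω = b ∧ k ω = c} := by
  simp only [CondIndepRV, measureReal_def, ← ENNReal.toReal_mul]
  refine forall₃_congr fun a b c => (ENNReal.toReal_eq_toReal_iff' ?_ ?_).symm <;> finiteness

theorem indepRV_iff_measureReal [IsProbabilityMeasure μ] {f : Ω → A} {g : Ω → B} :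
    IndepRV μ f g ↔ ∀ a b,
      μ.real {ω | f ω = a ∧ g ω = b} = μ.real {ω | f ω = a} * μ.real {ω | g ω = b} := by
  simp [IndepRV, condIndepRV_iff_measureReal]

theorem measureReal_eq_sum_measureReal_and [IsFiniteMeasure μ] [Fintype A] [MeasurableSpace A]
    [MeasurableSingletonClass A] {f : Ω → A} (hf : Measurable f) (P : Ω → Prop) :
    μ.real {ω | P ω} = ∑ a, μ.real {ω | f ω = a ∧ P ω} := by
  have hfib : ∀ a, MeasurableSet (f ⁻¹' {a}) := fun a => hf (measurableSet_singleton a)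
  rw [← measureReal_restrict_apply_univ, ← Set.preimage_univ (f := f), ← coe_univ,
    ← sum_measureReal_preimage_singleton _ fun a _ => hfib a]
  exact sum_congr rfl fun a _ => measureReal_restrict_apply (hfib a)

theorem measureReal_mul_measureReal_eq_of_eq_mul [IsFiniteMeasure μ]
    [Fintype A] [MeasurableSpace A] [MeasurableSingletonClass A]
    [Fintype B] [MeasurableSpace B] [MeasurableSingletonClass B]
    {f : Ω → A} {g : Ω → B} (hf : Measurable f) (hg : Measurable g) (E : Set Ω)
    {α : A → ℝ} {β : B → ℝ} (hfac : ∀ a b, μ.real {ω | f ω = a ∧ g ω = b ∧ ω ∈ E} = α a * β b)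
    (a : A) (b : B) :
    μ.real {ω | f ω = a ∧ g ω = b ∧ ω ∈ E} * μ.real E =
      μ.real {ω | f ω = a ∧ ω ∈ E} * μ.real {ω | g ω = b ∧ ω ∈ E} := by
  have marginal_f : ∀ a, μ.real {ω | f ω = a ∧ ω ∈ E} =
      ∑ b, μ.real {ω | f ω = a ∧ g ω = b ∧ ω ∈ E} := fun a => by
    rw [measureReal_eq_sum_measureReal_and hg]
    simp only [and_left_comm]
  have marginal_g : μ.real {ω | g ω = b ∧ ω ∈ E} =
      ∑ a, μ.real {ω | f ω = a ∧ g ω = b ∧ ω ∈ E} :=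
    measureReal_eq_sum_measureReal_and hf _
  have total : μ.real E = ∑ a, ∑ b, μ.real {ω | f ω = a ∧ g ω = b ∧ ω ∈ E} := by
    simp only [← marginal_f]
    exact measureReal_eq_sum_measureReal_and hf (· ∈ E)
  rw [marginal_f, marginal_g, total]
  exact mul_sum_sum_eq_sum_mul_sum_of_eq_mul hfac a b

theorem exists_eq_mul_of_condIndepRV [IsProbabilityMeasure μ]
    {X : Ω → A} {Y : Ω → B} {Z : Ω → C} {U : Ω → D}
    (hXY : IndepRV μ X Y) (hXYZ : CondIndepRV μ X Y Z) (hXYU : CondIndepRV μ X Y U)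
    (hZU : CondIndepRV μ Z U (fun ω => (X ω, Y ω))) (z : C) (u : D) :
    ∃ (α : A → ℝ) (β : B → ℝ), ∀ x y,
      μ.real {ω | X ω = x ∧ Y ω = y ∧ Z ω = z ∧ U ω = u} = α x * β y := by
  rw [indepRV_iff_measureReal] at hXY
  rw [condIndepRV_iff_measureReal] at hXYZ hXYU hZU
  refine ⟨fun x => μ.real {ω | X ω = x ∧ Z ω = z} * μ.real {ω | X ω = x ∧ U ω = u} /
      (μ.real {ω | X ω = x} * μ.real {ω | Z ω = z} * μ.real {ω | U ω = u}),
    fun y => μ.real {ω | Y ω = y ∧ Z ω = z} * μ.real {ω | Y ω = y ∧ U ω = u} /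
      μ.real {ω | Y ω = y}, fun x y => eq_div_mul_div_of_mul_mul_eq ?_ ?_⟩
  · set t := μ.real {ω | X ω = x ∧ Y ω = y ∧ Z ω = z ∧ U ω = u}
    set pZ := μ.real {ω | Z ω = z}
    set pU := μ.real {ω | U ω = u}
    have h4 : t * μ.real {ω | X ω = x ∧ Y ω = y} =
        μ.real {ω | X ω = x ∧ Y ω = y ∧ Z ω = z} * μ.real {ω | X ω = x ∧ Y ω = y ∧ U ω = u} := by
      simpa only [Prod.mk.injEq, and_comm, and_left_comm, and_assoc] using hZU z u (x, y)
    -- `t P(x) P(y) pZ pU = t P(x,y) pZ pU = (P(x,y,z) pZ) (P(x,y,u) pU)`, then `hXYZ`, `hXYU`.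
    linear_combination -t * pZ * pU * hXY x y + pZ * pU * h4
      + μ.real {ω | X ω = x ∧ Y ω = y ∧ U ω = u} * pU * hXYZ x y z
      + μ.real {ω | X ω = x ∧ Z ω = z} * μ.real {ω | Y ω = y ∧ Z ω = z} * hXYU x y u
  · intro h0
    simp only [mul_eq_zero, or_assoc] at h0
    rcases h0 with hx | hz | hu | hy
    · exact measureReal_mono_null (fun ω hω => hω.1) hx
    · exact measureReal_mono_null (fun ω hω => hω.2.2.1) hz
    · exact measureReal_mono_null (fun ω hω => hω.2.2.2) hu
    · exact measureReal_mono_null (fun ω hω => hω.2.1) hy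

end Probability

theorem ci_implication_I13_general
    {Ω : Type*} [MeasurableSpace Ω] (μ : Measure Ω) [IsProbabilityMeasure μ]
    {SX SY SZ SU : Type*}
    [Fintype SX] [MeasurableSpace SX] [MeasurableSingletonClass SX]
    [Fintype SY] [MeasurableSpace SY] [MeasurableSingletonClass SY]
    (ξX : Ω → SX) (ξY : Ω → SY) (ξZ : Ω → SZ) (ξU : Ω → SU)
    (mX : Measurable ξX) (mY : Measurable ξY)
    (h1 : IndepRV μ ξX ξY) (h2 : CondIndepRV μ ξX ξY ξZ) (h3 : CondIndepRV μ ξX ξY ξU) (h4 : CondIndepRV μ ξZ ξU (fun ω => (ξX ω, ξY ω))) :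
    CondIndepRV μ ξX ξY (fun ω => (ξZ ω, ξU ω)) := by
  rw [condIndepRV_iff_measureReal]
  rintro a b ⟨z, u⟩
  simp only [Prod.mk.injEq]
  obtain ⟨α, β, hfac⟩ := exists_eq_mul_of_condIndepRV h1 h2 h3 h4 z u
  exact measureReal_mul_measureReal_eq_of_eq_mul mX mY {ω | ξZ ω = z ∧ ξU ω = u} hfac a b

/-- Statement: the CI implication (I:13) for four discrete random variables. -/
theorem ci_implication_I13
    {Ω : Type*} [MeasurableSpace Ω] (μ : Measure Ω) [IsProbabilityMeasure μ]
    {SX SY SZ SU : Type*}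
    [Fintype SX] [Nonempty SX] [MeasurableSpace SX] [MeasurableSingletonClass SX]
    [Fintype SY] [Nonempty SY] [MeasurableSpace SY] [MeasurableSingletonClass SY]
    [Fintype SZ] [Nonempty SZ] [MeasurableSpace SZ] [MeasurableSingletonClass SZ]
    [Fintype SU] [Nonempty SU] [MeasurableSpace SU] [MeasurableSingletonClass SU]
    (ξX : Ω → SX) (ξY : Ω → SY) (ξZ : Ω → SZ) (ξU : Ω → SU)
    (mX : Measurable ξX) (mY : Measurable ξY) (mZ : Measurable ξZ) (mU : Measurable ξU)
    (h1 : IndepRV μ ξX ξY) (h2 : CondIndepRV μ ξX ξY ξZ) (h3 : CondIndepRV μ ξX ξY ξU) (h4 : CondIndepRV μ ξZ ξU (fun ω => (ξX ω, ξY ω))) :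
    CondIndepRV μ ξX ξY (fun ω => (ξZ ω, ξU ω)) :=
  ci_implication_I13_general μ ξX ξY ξZ ξU mX mY h1 h2 h3 h4
end

section
/- CI implication (I:15): let ξ_X, ξ_Y, ξ_Z, ξ_U be discrete random variables with nonempty finite ranges on a common probability space. If ξ_X ⊥ ξ_Y (unconditional independence), ξ_X ⊥ ξ_Y | ξ_Z, ξ_X ⊥ ξ_Z | ξ_U, and ξ_Z ⊥ ξ_U | (ξ_X, ξ_Y), then ξ_X ⊥ ξ_Z | (ξ_Y, ξ_U). -/
open MeasureTheory

open MeasureTheory in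
lemma pr_fiber {Ω V : Type*} [MeasurableSpace Ω] (μ : Measure Ω) [IsFiniteMeasure μ]
    [Fintype V] [MeasurableSpace V] [MeasurableSingletonClass V]
    (g : Ω → V) (hg : Measurable g) {s : Set Ω} (hs : MeasurableSet s) :
    (μ s).toReal = ∑ v : V, (μ (s ∩ {ω | g ω = v})).toReal := by
  have hcover : s = ⋃ v ∈ (Finset.univ : Finset V), s ∩ {ω | g ω = v} := by
    ext ω; simp
  have hmeas : ∀ v ∈ (Finset.univ : Finset V), MeasurableSet (s ∩ {ω | g ω = v}) := by
    intro v _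
    exact hs.inter (hg (measurableSet_singleton v))
  have hdisj : (↑(Finset.univ : Finset V) : Set V).PairwiseDisjoint
      (fun v => s ∩ {ω | g ω = v}) := by
    intro a _ b _ hab
    refine Set.disjoint_left.mpr ?_
    rintro ω ⟨_, ha⟩ ⟨_, hb⟩
    exact hab (ha.symm.trans hb)
  have hmeq : μ s = ∑ v : V, μ (s ∩ {ω | g ω = v}) := by
    conv_lhs => rw [hcover]
    exact measure_biUnion_finset hdisj hmeas
  rw [hmeq, ENNReal.toReal_sum (fun v _ => measure_ne_top μ _)]


open Finset

/-- AM-GM equality-forcing lemma for the CI implication. -/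
lemma crux_lemma {SZ : Type*} [Fintype SZ]
    (q f1 f2 A1 A2 : SZ → ℝ)
    (hf1 : ∀ z, 0 ≤ f1 z) (hf2 : ∀ z, 0 ≤ f2 z)
    (hA1 : ∀ z, 0 ≤ A1 z) (hA2 : ∀ z, 0 ≤ A2 z)
    (e1 : ∀ z, q z = f1 z * A1 z) (e2 : ∀ z, q z = f2 z * A2 z)
    (hqsum : ∑ z, q z = 1)
    (S1 : ∑ z, (if 0 < q z then A1 z * f2 z else 0) ≤ 1)
    (S2 : ∑ z, (if 0 < q z then A2 z * f1 z else 0) ≤ 1) :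
    ∀ z, 0 < q z → f1 z = f2 z := by
  have hq : ∀ z, 0 ≤ q z := fun z => (e1 z) ▸ mul_nonneg (hf1 z) (hA1 z)
  have hst : ∀ z, (A1 z * f2 z) * (A2 z * f1 z) = q z * q z := by
    intro z
    calc (A1 z * f2 z) * (A2 z * f1 z) = (f1 z * A1 z) * (f2 z * A2 z) := by ring
    _ = q z * q z := by rw [← e1, ← e2]
  have key : ∀ z, 0 < q z → 2 * q z ≤ A1 z * f2 z + A2 z * f1 z := by
    intro z hz
    by_contra hcon
    push_neg at hcon
    have hs : 0 ≤ A1 z * f2 z := mul_nonneg (hA1 z) (hf2 z)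
    have ht : 0 ≤ A2 z * f1 z := mul_nonneg (hA2 z) (hf1 z)
    nlinarith [hst z, sq_nonneg (A1 z * f2 z - A2 z * f1 z)]
  have sumq : ∑ z, (if 0 < q z then q z else 0) = 1 := by
    rw [← hqsum]
    refine Finset.sum_congr rfl fun z _ => ?_
    by_cases hz : 0 < q z
    · simp [hz]
    · have : q z = 0 := le_antisymm (not_lt.mp hz) (hq z)
      simp [hz, this]
  have tnn : ∀ z, 0 ≤ (if 0 < q z then A1 z * f2 z + A2 z * f1 z - 2 * q z else 0) := by
    intro z
    by_cases hz : 0 < q z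
    · simp only [if_pos hz]; linarith [key z hz]
    · simp [hz]
  have tsum : ∑ z, (if 0 < q z then A1 z * f2 z + A2 z * f1 z - 2 * q z else 0) = 0 := by
    have hle : ∑ z, (if 0 < q z then A1 z * f2 z + A2 z * f1 z - 2 * q z else 0) ≤ 0 := by
      have hrw : ∀ z : SZ, (if 0 < q z then A1 z * f2 z + A2 z * f1 z - 2 * q z else 0)
          = (if 0 < q z then A1 z * f2 z else 0) + (if 0 < q z then A2 z * f1 z else 0)
            - 2 * (if 0 < q z then q z else 0) := by
        intro z; by_cases hz : 0 < q z <;> simp [hz]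
      rw [Finset.sum_congr rfl (fun z _ => hrw z), Finset.sum_sub_distrib,
        Finset.sum_add_distrib, ← Finset.mul_sum, sumq]
      linarith
    exact le_antisymm hle (Finset.sum_nonneg fun z _ => tnn z)
  intro z hz
  have h0 : (if 0 < q z then A1 z * f2 z + A2 z * f1 z - 2 * q z else 0) = 0 :=
    (Finset.sum_eq_zero_iff_of_nonneg (fun z _ => tnn z)).mp tsum z (Finset.mem_univ z)
  rw [if_pos hz] at h0
  have hsq : (A1 z * f2 z - q z) ^ 2 = 0 := by linear_combination (A1 z * f2 z) * h0 - hst z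
  have hs : A1 z * f2 z = q z := by
    have := pow_eq_zero_iff (n := 2) (by norm_num) |>.mp hsq
    linarith [this]
  have hA1ne : A1 z ≠ 0 := by
    intro h
    rw [e1 z, h, mul_zero] at hz
    exact lt_irrefl 0 hz
  have : A1 z * f2 z = A1 z * f1 z := by rw [hs, e1 z]; ring
  exact (mul_left_cancel₀ hA1ne this).symm

section KeyReal

variable {SX SY SZ SU : Type*} [Fintype SX] [Fintype SY] [Fintype SZ] [Fintype SU]

theorem key_real
    (p : SX → SY → SZ → SU → ℝ)
    (pX : SX → ℝ) (pY : SY → ℝ) (pZ : SZ → ℝ) (pU : SU → ℝ)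
    (pXY : SX → SY → ℝ) (pXZ : SX → SZ → ℝ) (pYZ : SY → SZ → ℝ)
    (pXU : SX → SU → ℝ) (pZU : SZ → SU → ℝ) (pYU : SY → SU → ℝ)
    (pXYZ : SX → SY → SZ → ℝ) (pXYU : SX → SY → SU → ℝ)
    (pXZU : SX → SZ → SU → ℝ) (pYZU : SY → SZ → SU → ℝ)
    (hp : ∀ x y z u, 0 ≤ p x y z u)
    (dX : ∀ x, pX x = ∑ y, ∑ z, ∑ u, p x y z u)
    (dY : ∀ y, pY y = ∑ x, ∑ z, ∑ u, p x y z u)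
    (dZ : ∀ z, pZ z = ∑ x, ∑ y, ∑ u, p x y z u)
    (dU : ∀ u, pU u = ∑ x, ∑ y, ∑ z, p x y z u)
    (dXY : ∀ x y, pXY x y = ∑ z, ∑ u, p x y z u)
    (dXZ : ∀ x z, pXZ x z = ∑ y, ∑ u, p x y z u)
    (dYZ : ∀ y z, pYZ y z = ∑ x, ∑ u, p x y z u)
    (dXU : ∀ x u, pXU x u = ∑ y, ∑ z, p x y z u)
    (dZU : ∀ z u, pZU z u = ∑ x, ∑ y, p x y z u)
    (dYU : ∀ y u, pYU y u = ∑ x, ∑ z, p x y z u)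
    (dXYZ : ∀ x y z, pXYZ x y z = ∑ u, p x y z u)
    (dXYU : ∀ x y u, pXYU x y u = ∑ z, p x y z u)
    (dXZU : ∀ x z u, pXZU x z u = ∑ y, p x y z u)
    (dYZU : ∀ y z u, pYZU y z u = ∑ x, p x y z u)
    (H1 : ∀ x y, pXY x y = pX x * pY y)
    (H2 : ∀ x y z, pXYZ x y z * pZ z = pXZ x z * pYZ y z)
    (H3 : ∀ x z u, pXZU x z u * pU u = pXU x u * pZU z u)
    (H4 : ∀ x y z u, p x y z u * pXY x y = pXYZ x y z * pXYU x y u) :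
    ∀ x y z u, p x y z u * pYU y u = pXYU x y u * pYZU y z u := by
  classical
  -- nonnegativity of marginals
  have nnXYZ : ∀ x y z, 0 ≤ pXYZ x y z := fun x y z => by
    rw [dXYZ]; exact Finset.sum_nonneg fun _ _ => hp _ _ _ _
  have nnXYU : ∀ x y u, 0 ≤ pXYU x y u := fun x y u => by
    rw [dXYU]; exact Finset.sum_nonneg fun _ _ => hp _ _ _ _
  have nnXZU : ∀ x z u, 0 ≤ pXZU x z u := fun x z u => by
    rw [dXZU]; exact Finset.sum_nonneg fun _ _ => hp _ _ _ _
  have nnYZU : ∀ y z u, 0 ≤ pYZU y z u := fun y z u => by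
    rw [dYZU]; exact Finset.sum_nonneg fun _ _ => hp _ _ _ _
  have nnXZ : ∀ x z, 0 ≤ pXZ x z := fun x z => by
    rw [dXZ]; exact Finset.sum_nonneg fun _ _ => Finset.sum_nonneg fun _ _ => hp _ _ _ _
  have nnYZ : ∀ y z, 0 ≤ pYZ y z := fun y z => by
    rw [dYZ]; exact Finset.sum_nonneg fun _ _ => Finset.sum_nonneg fun _ _ => hp _ _ _ _
  have nnZU : ∀ z u, 0 ≤ pZU z u := fun z u => by
    rw [dZU]; exact Finset.sum_nonneg fun _ _ => Finset.sum_nonneg fun _ _ => hp _ _ _ _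
  have nnZ : ∀ z, 0 ≤ pZ z := fun z => by
    rw [dZ]
    exact Finset.sum_nonneg fun _ _ => Finset.sum_nonneg fun _ _ =>
      Finset.sum_nonneg fun _ _ => hp _ _ _ _
  have nnY : ∀ y, 0 ≤ pY y := fun y => by
    rw [dY]
    exact Finset.sum_nonneg fun _ _ => Finset.sum_nonneg fun _ _ =>
      Finset.sum_nonneg fun _ _ => hp _ _ _ _
  have nnX : ∀ x, 0 ≤ pX x := fun x => by
    rw [dX]
    exact Finset.sum_nonneg fun _ _ => Finset.sum_nonneg fun _ _ =>
      Finset.sum_nonneg fun _ _ => hp _ _ _ _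
  -- monotonicity facts
  have m1 : ∀ x y z u, p x y z u ≤ pXYU x y u := fun x y z u => by
    rw [dXYU]; exact Finset.single_le_sum (fun z' _ => hp x y z' u) (Finset.mem_univ z)
  have m2 : ∀ x y u, pXYU x y u ≤ pXU x u := fun x y u => by
    rw [dXYU, dXU]
    exact Finset.single_le_sum (f := fun y' => ∑ z, p x y' z u)
      (fun y' _ => Finset.sum_nonneg fun _ _ => hp _ _ _ _) (Finset.mem_univ y)
  have m3 : ∀ x y u, pXYU x y u ≤ pYU y u := fun x y u => by
    rw [dXYU, dYU]
    exact Finset.single_le_sum (f := fun x' => ∑ z, p x' y z u)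
      (fun x' _ => Finset.sum_nonneg fun _ _ => hp _ _ _ _) (Finset.mem_univ x)
  have m4 : ∀ x u, pXU x u ≤ pX x := fun x u => by
    rw [dXU, dX]
    refine Finset.sum_le_sum fun y _ => ?_
    exact Finset.sum_le_sum fun z _ =>
      Finset.single_le_sum (fun u' _ => hp x y z u') (Finset.mem_univ u)
  have m5 : ∀ x y u, pXYU x y u ≤ pY y := fun x y u => by
    rw [dXYU, dY]
    calc ∑ z, p x y z u ≤ ∑ z, ∑ u', p x y z u' :=
          Finset.sum_le_sum fun z _ =>
            Finset.single_le_sum (fun u' _ => hp x y z u') (Finset.mem_univ u)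
      _ ≤ ∑ x', ∑ z, ∑ u', p x' y z u' :=
          Finset.single_le_sum (f := fun x' => ∑ z, ∑ u', p x' y z u')
            (fun x' _ => Finset.sum_nonneg fun _ _ => Finset.sum_nonneg fun _ _ => hp _ _ _ _)
            (Finset.mem_univ x)
  have m12 : ∀ x y u, pXYU x y u ≤ pX x := fun x y u => by
    rw [dXYU, dX]
    calc ∑ z, p x y z u ≤ ∑ z, ∑ u', p x y z u' :=
          Finset.sum_le_sum fun z _ =>
            Finset.single_le_sum (fun u' _ => hp x y z u') (Finset.mem_univ u)
      _ ≤ ∑ y', ∑ z, ∑ u', p x y' z u' :=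
          Finset.single_le_sum (f := fun y' => ∑ z, ∑ u', p x y' z u')
            (fun y' _ => Finset.sum_nonneg fun _ _ => Finset.sum_nonneg fun _ _ => hp _ _ _ _)
            (Finset.mem_univ y)
  have m10 : ∀ x y u, pXYU x y u ≤ pU u := fun x y u => by
    rw [dXYU, dU]
    calc ∑ z, p x y z u ≤ ∑ y', ∑ z, p x y' z u :=
          Finset.single_le_sum (f := fun y' => ∑ z, p x y' z u)
            (fun y' _ => Finset.sum_nonneg fun _ _ => hp _ _ _ _) (Finset.mem_univ y)
      _ ≤ ∑ x', ∑ y', ∑ z, p x' y' z u :=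
          Finset.single_le_sum (f := fun x' => ∑ y', ∑ z, p x' y' z u)
            (fun x' _ => Finset.sum_nonneg fun _ _ => Finset.sum_nonneg fun _ _ => hp _ _ _ _)
            (Finset.mem_univ x)
  have m6 : ∀ y z u, pYZU y z u ≤ pZU z u := fun y z u => by
    rw [dYZU, dZU]
    exact Finset.sum_le_sum fun x _ =>
      Finset.single_le_sum (fun y' _ => hp x y' z u) (Finset.mem_univ y)
  have m7 : ∀ x y z u, p x y z u ≤ pZU z u := fun x y z u => by
    refine le_trans ?_ (m6 y z u)
    rw [dYZU]
    exact Finset.single_le_sum (fun x' _ => hp x' y z u) (Finset.mem_univ x)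
  have m8 : ∀ y z, pYZ y z ≤ pZ z := fun y z => by
    rw [dYZ, dZ]
    exact Finset.sum_le_sum fun x _ =>
      Finset.single_le_sum (f := fun y' => ∑ u, p x y' z u)
        (fun y' _ => Finset.sum_nonneg fun _ _ => hp _ _ _ _) (Finset.mem_univ y)
  have m9 : ∀ x y z, pXYZ x y z ≤ pZ z := fun x y z => by
    rw [dXYZ, dZ]
    calc ∑ u, p x y z u ≤ ∑ y', ∑ u, p x y' z u :=
          Finset.single_le_sum (f := fun y' => ∑ u, p x y' z u)
            (fun y' _ => Finset.sum_nonneg fun _ _ => hp _ _ _ _) (Finset.mem_univ y)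
      _ ≤ ∑ x', ∑ y', ∑ u, p x' y' z u :=
          Finset.single_le_sum (f := fun x' => ∑ y', ∑ u, p x' y' z u)
            (fun x' _ => Finset.sum_nonneg fun _ _ => Finset.sum_nonneg fun _ _ => hp _ _ _ _)
            (Finset.mem_univ x)
  have m11 : ∀ z u, pZU z u ≤ pZ z := fun z u => by
    rw [dZU, dZ]
    exact Finset.sum_le_sum fun x _ => Finset.sum_le_sum fun y _ =>
      Finset.single_le_sum (fun u' _ => hp x y z u') (Finset.mem_univ u)
  -- reorderings
  have r1 : ∀ x y, pXY x y = ∑ z, pXYZ x y z := fun x y => by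
    rw [dXY]; exact Finset.sum_congr rfl fun z _ => (dXYZ x y z).symm
  have r3 : ∀ x u, pXU x u = ∑ y, pXYU x y u := fun x u => by
    rw [dXU]; exact Finset.sum_congr rfl fun y _ => (dXYU x y u).symm
  have r4 : ∀ u, pU u = ∑ z, pZU z u := fun u => by
    rw [dU]
    calc (∑ x, ∑ y, ∑ z, p x y z u) = ∑ x, ∑ z, ∑ y, p x y z u :=
          Finset.sum_congr rfl fun x _ => Finset.sum_comm
      _ = ∑ z, ∑ x, ∑ y, p x y z u := Finset.sum_comm
      _ = ∑ z, pZU z u := Finset.sum_congr rfl fun z _ => (dZU z u).symm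
  have r6 : ∀ y u, pYU y u = ∑ x, pXYU x y u := fun y u => by
    rw [dYU]; exact Finset.sum_congr rfl fun x _ => (dXYU x y u).symm
  -- MAIN PART
  intro x y z u
  rcases (nnXYU x y u).lt_or_eq with hxyu | hxyu
  swap
  · have hp0 : p x y z u = 0 :=
      le_antisymm (by rw [hxyu]; exact m1 x y z u) (hp _ _ _ _)
    rw [hp0, ← hxyu, zero_mul, zero_mul]
  rcases (nnZU z u).lt_or_eq with hzu | hzu
  swap
  · have hp0 : p x y z u = 0 :=
      le_antisymm (by rw [hzu]; exact m7 x y z u) (hp _ _ _ _)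
    have hyzu0 : pYZU y z u = 0 :=
      le_antisymm (by rw [hzu]; exact m6 y z u) (nnYZU _ _ _)
    rw [hp0, hyzu0, zero_mul, mul_zero]
  -- positivity
  have hX : 0 < pX x := lt_of_lt_of_le hxyu (m12 x y u)
  have hY : 0 < pY y := lt_of_lt_of_le hxyu (m5 x y u)
  have hU : 0 < pU u := lt_of_lt_of_le hxyu (m10 x y u)
  have hXU : 0 < pXU x u := lt_of_lt_of_le hxyu (m2 x y u)
  have hZ : 0 < pZ z := lt_of_lt_of_le hzu (m11 z u)
  -- local functions
  set f : SX → SZ → ℝ := fun x' z' => pXZ x' z' / (pX x' * pZ z') with hf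
  set c : SY → SZ → ℝ := fun y' z' => pYZ y' z' / pY y' with hc
  set At : SX → SZ → ℝ := fun x' z' => ∑ y', pXYU x' y' u * c y' z' with hAt
  have nnf : ∀ x' z', 0 ≤ f x' z' := fun x' z' => by
    simp only [hf]; exact div_nonneg (nnXZ _ _) (mul_nonneg (nnX _) (nnZ _))
  have nnc : ∀ y' z', 0 ≤ c y' z' := fun y' z' => by
    simp only [hc]; exact div_nonneg (nnYZ _ _) (nnY _)
  have nnAt : ∀ x' z', 0 ≤ At x' z' := fun x' z' => by
    simp only [hAt]
    exact Finset.sum_nonneg fun y' _ => mul_nonneg (nnXYU _ _ _) (nnc _ _)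
  -- L1 : atom triple formula
  have hL1 : ∀ x' y' z', 0 < pX x' → 0 < pY y' →
      pXYZ x' y' z' = c y' z' * f x' z' * (pX x' * pY y') := by
    intro x' y' z' hx hy
    simp only [hc, hf]
    rcases (nnZ z').lt_or_eq with hz' | hz'
    · have hrw : pYZ y' z' / pY y' * (pXZ x' z' / (pX x' * pZ z')) * (pX x' * pY y')
          = pXZ x' z' * pYZ y' z' / pZ z' := by
        field_simp
      rw [hrw, eq_div_iff (ne_of_gt hz')]
      linear_combination H2 x' y' z'
    · have hXYZ0 : pXYZ x' y' z' = 0 :=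
        le_antisymm (by rw [hz']; exact m9 x' y' z') (nnXYZ _ _ _)
      have hYZ0 : pYZ y' z' = 0 :=
        le_antisymm (by rw [hz']; exact m8 y' z') (nnYZ _ _)
      rw [hXYZ0, hYZ0]
      simp
  -- L2 : normalization of c*f
  have hL2 : ∀ x' y', 0 < pX x' → 0 < pY y' → ∑ z', c y' z' * f x' z' = 1 := by
    intro x' y' hx hy
    have hsum : (∑ z', c y' z' * f x' z') * (pX x' * pY y') = pX x' * pY y' := by
      rw [Finset.sum_mul]
      rw [Finset.sum_congr rfl fun z' _ => (hL1 x' y' z' hx hy).symm, ← r1, H1]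
    have hne : pX x' * pY y' ≠ 0 := ne_of_gt (mul_pos hx hy)
    exact mul_right_cancel₀ hne (by rw [hsum, one_mul])
  -- L3 : atom 4-point formula
  have hL3 : ∀ x' y', 0 < pXYU x' y' u → ∀ z',
      p x' y' z' u = c y' z' * f x' z' * pXYU x' y' u := by
    intro x' y' hxyu' z'
    have hx : 0 < pX x' := lt_of_lt_of_le hxyu' (m12 x' y' u)
    have hy : 0 < pY y' := lt_of_lt_of_le hxyu' (m5 x' y' u)
    have hxy : pXY x' y' = pX x' * pY y' := H1 x' y'
    have hne : pXY x' y' ≠ 0 := by rw [hxy]; exact ne_of_gt (mul_pos hx hy)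
    apply mul_right_cancel₀ hne
    calc p x' y' z' u * pXY x' y' = pXYZ x' y' z' * pXYU x' y' u := H4 x' y' z' u
      _ = c y' z' * f x' z' * (pX x' * pY y') * pXYU x' y' u := by
          rw [hL1 x' y' z' hx hy]
      _ = c y' z' * f x' z' * pXYU x' y' u * pXY x' y' := by rw [hxy]; ring
  have hL3' : ∀ x' y' z', p x' y' z' u = c y' z' * f x' z' * pXYU x' y' u := by
    intro x' y' z'
    rcases (nnXYU x' y' u).lt_or_eq with h | h
    · exact hL3 x' y' h z'
    · have hp0 : p x' y' z' u = 0 :=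
        le_antisymm (by rw [h]; exact m1 x' y' z' u) (hp _ _ _ _)
      rw [hp0, ← h, mul_zero]
  -- L4
  have hL4 : ∀ x', 0 < pXU x' u → ∀ z',
      pXU x' u * (pZU z' u / pU u) = f x' z' * At x' z' := by
    intro x' hxu z'
    have hXZUe : pXZU x' z' u = pXU x' u * (pZU z' u / pU u) := by
      rw [mul_div_assoc', eq_div_iff (ne_of_gt hU)]
      linear_combination H3 x' z' u
    rw [← hXZUe, dXZU]
    calc ∑ y', p x' y' z' u = ∑ y', c y' z' * f x' z' * pXYU x' y' u :=
          Finset.sum_congr rfl fun y' _ => hL3' x' y' z'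
      _ = f x' z' * At x' z' := by
          simp only [hAt]
          rw [Finset.mul_sum]
          exact Finset.sum_congr rfl fun y' _ => by ring
  -- T bound
  have hT : ∀ x1 x2, 0 < pXU x1 u → 0 < pX x2 →
      ∑ z', (if 0 < pZU z' u / pU u then (At x1 z' / pXU x1 u) * f x2 z' else 0) ≤ 1 := by
    intro x1 x2 hx1 hx2
    have step1 : ∑ z', (if 0 < pZU z' u / pU u then (At x1 z' / pXU x1 u) * f x2 z' else 0)
        ≤ ∑ z', (At x1 z' / pXU x1 u) * f x2 z' := by
      refine Finset.sum_le_sum fun z' _ => ?_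
      by_cases h : 0 < pZU z' u / pU u
      · rw [if_pos h]
      · rw [if_neg h]
        exact mul_nonneg (div_nonneg (nnAt _ _) hx1.le) (nnf _ _)
    refine le_trans step1 ?_
    have expand : ∑ z', (At x1 z' / pXU x1 u) * f x2 z'
        = (∑ y', pXYU x1 y' u * (∑ z', c y' z' * f x2 z')) / pXU x1 u := by
      calc ∑ z', (At x1 z' / pXU x1 u) * f x2 z'
          = (∑ z', At x1 z' * f x2 z') / pXU x1 u := by
            rw [Finset.sum_div]
            exact Finset.sum_congr rfl fun z' _ => by ring
        _ = (∑ z', ∑ y', pXYU x1 y' u * c y' z' * f x2 z') / pXU x1 u := by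
            congr 1
            refine Finset.sum_congr rfl fun z' _ => ?_
            simp only [hAt]
            rw [Finset.sum_mul]
        _ = (∑ y', ∑ z', pXYU x1 y' u * c y' z' * f x2 z') / pXU x1 u := by
            rw [Finset.sum_comm]
        _ = (∑ y', pXYU x1 y' u * (∑ z', c y' z' * f x2 z')) / pXU x1 u := by
            congr 1
            refine Finset.sum_congr rfl fun y' _ => ?_
            rw [Finset.mul_sum]
            exact Finset.sum_congr rfl fun z' _ => by ring
    rw [expand]
    have inner : ∀ y', pXYU x1 y' u * (∑ z', c y' z' * f x2 z') ≤ pXYU x1 y' u := by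
      intro y'
      rcases (nnXYU x1 y' u).lt_or_eq with h | h
      · have hy' : 0 < pY y' := lt_of_lt_of_le h (m5 x1 y' u)
        rw [hL2 x2 y' hx2 hy', mul_one]
      · rw [← h, zero_mul]
    calc (∑ y', pXYU x1 y' u * (∑ z', c y' z' * f x2 z')) / pXU x1 u
        ≤ (∑ y', pXYU x1 y' u) / pXU x1 u := by
          apply div_le_div_of_nonneg_right ?_ hx1.le
          exact Finset.sum_le_sum fun y' _ => inner y'
      _ = pXU x1 u / pXU x1 u := by rw [← r3]
      _ = 1 := div_self (ne_of_gt hx1)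
  -- q normalization
  have qsum : ∑ z', pZU z' u / pU u = 1 := by
    rw [← Finset.sum_div, ← r4, div_self (ne_of_gt hU)]
  -- crux
  have crux : ∀ x1 x2, 0 < pXU x1 u → 0 < pXU x2 u →
      ∀ z', 0 < pZU z' u / pU u → f x1 z' = f x2 z' := by
    intro x1 x2 hx1 hx2
    have hpx1 : 0 < pX x1 := lt_of_lt_of_le hx1 (m4 x1 u)
    have hpx2 : 0 < pX x2 := lt_of_lt_of_le hx2 (m4 x2 u)
    refine crux_lemma (fun z' => pZU z' u / pU u) (f x1) (f x2)
      (fun z' => At x1 z' / pXU x1 u) (fun z' => At x2 z' / pXU x2 u)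
      (nnf x1) (nnf x2)
      (fun z' => div_nonneg (nnAt _ _) hx1.le)
      (fun z' => div_nonneg (nnAt _ _) hx2.le)
      ?_ ?_ qsum (hT x1 x2 hx1 hpx2) (hT x2 x1 hx2 hpx1)
    · intro z'
      show pZU z' u / pU u = f x1 z' * (At x1 z' / pXU x1 u)
      rw [← mul_div_assoc, eq_div_iff (ne_of_gt hx1)]
      linear_combination hL4 x1 hx1 z'
    · intro z'
      show pZU z' u / pU u = f x2 z' * (At x2 z' / pXU x2 u)
      rw [← mul_div_assoc, eq_div_iff (ne_of_gt hx2)]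
      linear_combination hL4 x2 hx2 z'
  -- assembly
  have hq : 0 < pZU z u / pU u := div_pos hzu hU
  have hfx : ∀ x', 0 < pXYU x' y u → f x' z = f x z := fun x' hx' =>
    crux x' x (lt_of_lt_of_le hx' (m2 x' y u)) hXU z hq
  have hyzu : pYZU y z u = c y z * f x z * pYU y u := by
    rw [dYZU, r6, Finset.mul_sum]
    refine Finset.sum_congr rfl fun x' _ => ?_
    rcases (nnXYU x' y u).lt_or_eq with h | h
    · rw [hL3 x' y h z, hfx x' h]
    · have hp0 : p x' y z u = 0 :=
        le_antisymm (by rw [h]; exact m1 x' y z u) (hp _ _ _ _)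
      rw [hp0, ← h, mul_zero]
  rw [hL3 x y hxyu z, hyzu]
  ring

end KeyReal

/-- Statement: the CI implication (I:15) for four discrete random variables. -/
theorem ci_implication_I15
    {Ω : Type*} [MeasurableSpace Ω] (μ : Measure Ω) [IsProbabilityMeasure μ]
    {SX SY SZ SU : Type*}
    [Fintype SX] [Nonempty SX] [MeasurableSpace SX] [MeasurableSingletonClass SX]
    [Fintype SY] [Nonempty SY] [MeasurableSpace SY] [MeasurableSingletonClass SY]
    [Fintype SZ] [Nonempty SZ] [MeasurableSpace SZ] [MeasurableSingletonClass SZ]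
    [Fintype SU] [Nonempty SU] [MeasurableSpace SU] [MeasurableSingletonClass SU]
    (ξX : Ω → SX) (ξY : Ω → SY) (ξZ : Ω → SZ) (ξU : Ω → SU)
    (mX : Measurable ξX) (mY : Measurable ξY) (mZ : Measurable ξZ) (mU : Measurable ξU)
    (h1 : IndepRV μ ξX ξY) (h2 : CondIndepRV μ ξX ξY ξZ) (h3 : CondIndepRV μ ξX ξZ ξU) (h4 : CondIndepRV μ ξZ ξU (fun ω => (ξX ω, ξY ω))) :
    CondIndepRV μ ξX ξZ (fun ω => (ξY ω, ξU ω)) := by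
  classical
  intro x z yu
  obtain ⟨y, u⟩ := yu
  have msX : ∀ x, MeasurableSet {ω | ξX ω = x} := fun x => mX (measurableSet_singleton x)
  have msY : ∀ y, MeasurableSet {ω | ξY ω = y} := fun y => mY (measurableSet_singleton y)
  have msZ : ∀ z, MeasurableSet {ω | ξZ ω = z} := fun z => mZ (measurableSet_singleton z)
  have msU : ∀ u, MeasurableSet {ω | ξU ω = u} := fun u => mU (measurableSet_singleton u)
  have bX : ∀ (x : SX), (μ {ω | ξX ω = x}).toReal = ∑ y : SY, ∑ z : SZ, ∑ u : SU, (μ {ω | ξX ω = x ∧ ξY ω = y ∧ ξZ ω = z ∧ ξU ω = u}).toReal := by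
    intro x
    have h0 : MeasurableSet {ω | ξX ω = x} := (msX x)
    rw [pr_fiber μ ξY mY h0]
    refine Finset.sum_congr rfl fun y _ => ?_
    rw [pr_fiber μ ξZ mZ (h0.inter (msY y))]
    refine Finset.sum_congr rfl fun z _ => ?_
    rw [pr_fiber μ ξU mU ((h0.inter (msY y)).inter (msZ z))]
    refine Finset.sum_congr rfl fun u _ => ?_
    refine congrArg (fun s => (μ s).toReal) ?_
    ext ω
    simp only [Set.mem_inter_iff, Set.mem_setOf_eq]
    tauto
  have bY : ∀ (y : SY), (μ {ω | ξY ω = y}).toReal = ∑ x : SX, ∑ z : SZ, ∑ u : SU, (μ {ω | ξX ω = x ∧ ξY ω = y ∧ ξZ ω = z ∧ ξU ω = u}).toReal := by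
    intro y
    have h0 : MeasurableSet {ω | ξY ω = y} := (msY y)
    rw [pr_fiber μ ξX mX h0]
    refine Finset.sum_congr rfl fun x _ => ?_
    rw [pr_fiber μ ξZ mZ (h0.inter (msX x))]
    refine Finset.sum_congr rfl fun z _ => ?_
    rw [pr_fiber μ ξU mU ((h0.inter (msX x)).inter (msZ z))]
    refine Finset.sum_congr rfl fun u _ => ?_
    refine congrArg (fun s => (μ s).toReal) ?_
    ext ω
    simp only [Set.mem_inter_iff, Set.mem_setOf_eq]
    tauto
  have bXY : ∀ (x : SX) (y : SY), (μ {ω | ξX ω = x ∧ ξY ω = y}).toReal = ∑ z : SZ, ∑ u : SU, (μ {ω | ξX ω = x ∧ ξY ω = y ∧ ξZ ω = z ∧ ξU ω = u}).toReal := by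
    intro x y
    have h0 : MeasurableSet {ω | ξX ω = x ∧ ξY ω = y} := ((msX x).inter (msY y))
    rw [pr_fiber μ ξZ mZ h0]
    refine Finset.sum_congr rfl fun z _ => ?_
    rw [pr_fiber μ ξU mU (h0.inter (msZ z))]
    refine Finset.sum_congr rfl fun u _ => ?_
    refine congrArg (fun s => (μ s).toReal) ?_
    ext ω
    simp only [Set.mem_inter_iff, Set.mem_setOf_eq]
    tauto
  have bZ : ∀ (z : SZ), (μ {ω | ξZ ω = z}).toReal = ∑ x : SX, ∑ y : SY, ∑ u : SU, (μ {ω | ξX ω = x ∧ ξY ω = y ∧ ξZ ω = z ∧ ξU ω = u}).toReal := by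
    intro z
    have h0 : MeasurableSet {ω | ξZ ω = z} := (msZ z)
    rw [pr_fiber μ ξX mX h0]
    refine Finset.sum_congr rfl fun x _ => ?_
    rw [pr_fiber μ ξY mY (h0.inter (msX x))]
    refine Finset.sum_congr rfl fun y _ => ?_
    rw [pr_fiber μ ξU mU ((h0.inter (msX x)).inter (msY y))]
    refine Finset.sum_congr rfl fun u _ => ?_
    refine congrArg (fun s => (μ s).toReal) ?_
    ext ω
    simp only [Set.mem_inter_iff, Set.mem_setOf_eq]
    tauto
  have bXZ : ∀ (x : SX) (z : SZ), (μ {ω | ξX ω = x ∧ ξZ ω = z}).toReal = ∑ y : SY, ∑ u : SU, (μ {ω | ξX ω = x ∧ ξY ω = y ∧ ξZ ω = z ∧ ξU ω = u}).toReal := by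
    intro x z
    have h0 : MeasurableSet {ω | ξX ω = x ∧ ξZ ω = z} := ((msX x).inter (msZ z))
    rw [pr_fiber μ ξY mY h0]
    refine Finset.sum_congr rfl fun y _ => ?_
    rw [pr_fiber μ ξU mU (h0.inter (msY y))]
    refine Finset.sum_congr rfl fun u _ => ?_
    refine congrArg (fun s => (μ s).toReal) ?_
    ext ω
    simp only [Set.mem_inter_iff, Set.mem_setOf_eq]
    tauto
  have bYZ : ∀ (y : SY) (z : SZ), (μ {ω | ξY ω = y ∧ ξZ ω = z}).toReal = ∑ x : SX, ∑ u : SU, (μ {ω | ξX ω = x ∧ ξY ω = y ∧ ξZ ω = z ∧ ξU ω = u}).toReal := by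
    intro y z
    have h0 : MeasurableSet {ω | ξY ω = y ∧ ξZ ω = z} := ((msY y).inter (msZ z))
    rw [pr_fiber μ ξX mX h0]
    refine Finset.sum_congr rfl fun x _ => ?_
    rw [pr_fiber μ ξU mU (h0.inter (msX x))]
    refine Finset.sum_congr rfl fun u _ => ?_
    refine congrArg (fun s => (μ s).toReal) ?_
    ext ω
    simp only [Set.mem_inter_iff, Set.mem_setOf_eq]
    tauto
  have bXYZ : ∀ (x : SX) (y : SY) (z : SZ), (μ {ω | ξX ω = x ∧ ξY ω = y ∧ ξZ ω = z}).toReal = ∑ u : SU, (μ {ω | ξX ω = x ∧ ξY ω = y ∧ ξZ ω = z ∧ ξU ω = u}).toReal := by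
    intro x y z
    have h0 : MeasurableSet {ω | ξX ω = x ∧ ξY ω = y ∧ ξZ ω = z} := ((msX x).inter ((msY y).inter (msZ z)))
    rw [pr_fiber μ ξU mU h0]
    refine Finset.sum_congr rfl fun u _ => ?_
    refine congrArg (fun s => (μ s).toReal) ?_
    ext ω
    simp only [Set.mem_inter_iff, Set.mem_setOf_eq]
    tauto
  have bU : ∀ (u : SU), (μ {ω | ξU ω = u}).toReal = ∑ x : SX, ∑ y : SY, ∑ z : SZ, (μ {ω | ξX ω = x ∧ ξY ω = y ∧ ξZ ω = z ∧ ξU ω = u}).toReal := by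
    intro u
    have h0 : MeasurableSet {ω | ξU ω = u} := (msU u)
    rw [pr_fiber μ ξX mX h0]
    refine Finset.sum_congr rfl fun x _ => ?_
    rw [pr_fiber μ ξY mY (h0.inter (msX x))]
    refine Finset.sum_congr rfl fun y _ => ?_
    rw [pr_fiber μ ξZ mZ ((h0.inter (msX x)).inter (msY y))]
    refine Finset.sum_congr rfl fun z _ => ?_
    refine congrArg (fun s => (μ s).toReal) ?_
    ext ω
    simp only [Set.mem_inter_iff, Set.mem_setOf_eq]
    tauto
  have bXU : ∀ (x : SX) (u : SU), (μ {ω | ξX ω = x ∧ ξU ω = u}).toReal = ∑ y : SY, ∑ z : SZ, (μ {ω | ξX ω = x ∧ ξY ω = y ∧ ξZ ω = z ∧ ξU ω = u}).toReal := by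
    intro x u
    have h0 : MeasurableSet {ω | ξX ω = x ∧ ξU ω = u} := ((msX x).inter (msU u))
    rw [pr_fiber μ ξY mY h0]
    refine Finset.sum_congr rfl fun y _ => ?_
    rw [pr_fiber μ ξZ mZ (h0.inter (msY y))]
    refine Finset.sum_congr rfl fun z _ => ?_
    refine congrArg (fun s => (μ s).toReal) ?_
    ext ω
    simp only [Set.mem_inter_iff, Set.mem_setOf_eq]
    tauto
  have bYU : ∀ (y : SY) (u : SU), (μ {ω | ξY ω = y ∧ ξU ω = u}).toReal = ∑ x : SX, ∑ z : SZ, (μ {ω | ξX ω = x ∧ ξY ω = y ∧ ξZ ω = z ∧ ξU ω = u}).toReal := by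
    intro y u
    have h0 : MeasurableSet {ω | ξY ω = y ∧ ξU ω = u} := ((msY y).inter (msU u))
    rw [pr_fiber μ ξX mX h0]
    refine Finset.sum_congr rfl fun x _ => ?_
    rw [pr_fiber μ ξZ mZ (h0.inter (msX x))]
    refine Finset.sum_congr rfl fun z _ => ?_
    refine congrArg (fun s => (μ s).toReal) ?_
    ext ω
    simp only [Set.mem_inter_iff, Set.mem_setOf_eq]
    tauto
  have bXYU : ∀ (x : SX) (y : SY) (u : SU), (μ {ω | ξX ω = x ∧ ξY ω = y ∧ ξU ω = u}).toReal = ∑ z : SZ, (μ {ω | ξX ω = x ∧ ξY ω = y ∧ ξZ ω = z ∧ ξU ω = u}).toReal := by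
    intro x y u
    have h0 : MeasurableSet {ω | ξX ω = x ∧ ξY ω = y ∧ ξU ω = u} := ((msX x).inter ((msY y).inter (msU u)))
    rw [pr_fiber μ ξZ mZ h0]
    refine Finset.sum_congr rfl fun z _ => ?_
    refine congrArg (fun s => (μ s).toReal) ?_
    ext ω
    simp only [Set.mem_inter_iff, Set.mem_setOf_eq]
    tauto
  have bZU : ∀ (z : SZ) (u : SU), (μ {ω | ξZ ω = z ∧ ξU ω = u}).toReal = ∑ x : SX, ∑ y : SY, (μ {ω | ξX ω = x ∧ ξY ω = y ∧ ξZ ω = z ∧ ξU ω = u}).toReal := by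
    intro z u
    have h0 : MeasurableSet {ω | ξZ ω = z ∧ ξU ω = u} := ((msZ z).inter (msU u))
    rw [pr_fiber μ ξX mX h0]
    refine Finset.sum_congr rfl fun x _ => ?_
    rw [pr_fiber μ ξY mY (h0.inter (msX x))]
    refine Finset.sum_congr rfl fun y _ => ?_
    refine congrArg (fun s => (μ s).toReal) ?_
    ext ω
    simp only [Set.mem_inter_iff, Set.mem_setOf_eq]
    tauto
  have bXZU : ∀ (x : SX) (z : SZ) (u : SU), (μ {ω | ξX ω = x ∧ ξZ ω = z ∧ ξU ω = u}).toReal = ∑ y : SY, (μ {ω | ξX ω = x ∧ ξY ω = y ∧ ξZ ω = z ∧ ξU ω = u}).toReal := by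
    intro x z u
    have h0 : MeasurableSet {ω | ξX ω = x ∧ ξZ ω = z ∧ ξU ω = u} := ((msX x).inter ((msZ z).inter (msU u)))
    rw [pr_fiber μ ξY mY h0]
    refine Finset.sum_congr rfl fun y _ => ?_
    refine congrArg (fun s => (μ s).toReal) ?_
    ext ω
    simp only [Set.mem_inter_iff, Set.mem_setOf_eq]
    tauto
  have bYZU : ∀ (y : SY) (z : SZ) (u : SU), (μ {ω | ξY ω = y ∧ ξZ ω = z ∧ ξU ω = u}).toReal = ∑ x : SX, (μ {ω | ξX ω = x ∧ ξY ω = y ∧ ξZ ω = z ∧ ξU ω = u}).toReal := by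
    intro y z u
    have h0 : MeasurableSet {ω | ξY ω = y ∧ ξZ ω = z ∧ ξU ω = u} := ((msY y).inter ((msZ z).inter (msU u)))
    rw [pr_fiber μ ξX mX h0]
    refine Finset.sum_congr rfl fun x _ => ?_
    refine congrArg (fun s => (μ s).toReal) ?_
    ext ω
    simp only [Set.mem_inter_iff, Set.mem_setOf_eq]
    tauto
  -- hypotheses in real form
  have H1' : ∀ x y, (μ {ω | ξX ω = x ∧ ξY ω = y}).toReal
      = (μ {ω | ξX ω = x}).toReal * (μ {ω | ξY ω = y}).toReal := by
    intro x y
    have h := h1 x y ()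
    simp only [Set.setOf_true, measure_univ, mul_one, eq_self_iff_true, and_true] at h
    have h2 := congrArg ENNReal.toReal h
    rwa [ENNReal.toReal_mul] at h2
  have H2' : ∀ x y z, (μ {ω | ξX ω = x ∧ ξY ω = y ∧ ξZ ω = z}).toReal * (μ {ω | ξZ ω = z}).toReal
      = (μ {ω | ξX ω = x ∧ ξZ ω = z}).toReal * (μ {ω | ξY ω = y ∧ ξZ ω = z}).toReal := by
    intro x y z
    have h := congrArg ENNReal.toReal (h2 x y z)
    rwa [ENNReal.toReal_mul, ENNReal.toReal_mul] at h
  have H3' : ∀ x z u, (μ {ω | ξX ω = x ∧ ξZ ω = z ∧ ξU ω = u}).toReal * (μ {ω | ξU ω = u}).toReal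
      = (μ {ω | ξX ω = x ∧ ξU ω = u}).toReal * (μ {ω | ξZ ω = z ∧ ξU ω = u}).toReal := by
    intro x z u
    have h := congrArg ENNReal.toReal (h3 x z u)
    rwa [ENNReal.toReal_mul, ENNReal.toReal_mul] at h
  have H4' : ∀ x y z u,
      (μ {ω | ξX ω = x ∧ ξY ω = y ∧ ξZ ω = z ∧ ξU ω = u}).toReal
        * (μ {ω | ξX ω = x ∧ ξY ω = y}).toReal
      = (μ {ω | ξX ω = x ∧ ξY ω = y ∧ ξZ ω = z}).toReal
        * (μ {ω | ξX ω = x ∧ ξY ω = y ∧ ξU ω = u}).toReal := by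
    intro x y z u
    have h := h4 z u (x, y)
    have e1 : {ω | ξZ ω = z ∧ ξU ω = u ∧ (ξX ω, ξY ω) = (x, y)}
        = {ω | ξX ω = x ∧ ξY ω = y ∧ ξZ ω = z ∧ ξU ω = u} := by
      ext ω; simp only [Set.mem_setOf_eq, Prod.mk.injEq]; tauto
    have e2 : {ω | (ξX ω, ξY ω) = (x, y)} = {ω | ξX ω = x ∧ ξY ω = y} := by
      ext ω; simp only [Set.mem_setOf_eq, Prod.mk.injEq]
    have e3 : {ω | ξZ ω = z ∧ (ξX ω, ξY ω) = (x, y)}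
        = {ω | ξX ω = x ∧ ξY ω = y ∧ ξZ ω = z} := by
      ext ω; simp only [Set.mem_setOf_eq, Prod.mk.injEq]; tauto
    have e4 : {ω | ξU ω = u ∧ (ξX ω, ξY ω) = (x, y)}
        = {ω | ξX ω = x ∧ ξY ω = y ∧ ξU ω = u} := by
      ext ω; simp only [Set.mem_setOf_eq, Prod.mk.injEq]; tauto
    rw [e1, e2, e3, e4] at h
    have h2 := congrArg ENNReal.toReal h
    rwa [ENNReal.toReal_mul, ENNReal.toReal_mul] at h2
  -- main real statement
  have main := key_real
    (fun x y z u => (μ {ω | ξX ω = x ∧ ξY ω = y ∧ ξZ ω = z ∧ ξU ω = u}).toReal)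
    (fun x => (μ {ω | ξX ω = x}).toReal)
    (fun y => (μ {ω | ξY ω = y}).toReal)
    (fun z => (μ {ω | ξZ ω = z}).toReal)
    (fun u => (μ {ω | ξU ω = u}).toReal)
    (fun x y => (μ {ω | ξX ω = x ∧ ξY ω = y}).toReal)
    (fun x z => (μ {ω | ξX ω = x ∧ ξZ ω = z}).toReal)
    (fun y z => (μ {ω | ξY ω = y ∧ ξZ ω = z}).toReal)
    (fun x u => (μ {ω | ξX ω = x ∧ ξU ω = u}).toReal)
    (fun z u => (μ {ω | ξZ ω = z ∧ ξU ω = u}).toReal)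
    (fun y u => (μ {ω | ξY ω = y ∧ ξU ω = u}).toReal)
    (fun x y z => (μ {ω | ξX ω = x ∧ ξY ω = y ∧ ξZ ω = z}).toReal)
    (fun x y u => (μ {ω | ξX ω = x ∧ ξY ω = y ∧ ξU ω = u}).toReal)
    (fun x z u => (μ {ω | ξX ω = x ∧ ξZ ω = z ∧ ξU ω = u}).toReal)
    (fun y z u => (μ {ω | ξY ω = y ∧ ξZ ω = z ∧ ξU ω = u}).toReal)
    (fun _ _ _ _ => ENNReal.toReal_nonneg)
    bX bY bZ bU bXY bXZ bYZ bXU bZU bYU bXYZ bXYU bXZU bYZU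
    H1' H2' H3' H4'
  -- convert goal
  have g1 : {ω | ξX ω = x ∧ ξZ ω = z ∧ (ξY ω, ξU ω) = (y, u)}
      = {ω | ξX ω = x ∧ ξY ω = y ∧ ξZ ω = z ∧ ξU ω = u} := by
    ext ω; simp only [Set.mem_setOf_eq, Prod.mk.injEq]; tauto
  have g2 : {ω | (ξY ω, ξU ω) = (y, u)} = {ω | ξY ω = y ∧ ξU ω = u} := by
    ext ω; simp only [Set.mem_setOf_eq, Prod.mk.injEq]
  have g3 : {ω | ξX ω = x ∧ (ξY ω, ξU ω) = (y, u)}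
      = {ω | ξX ω = x ∧ ξY ω = y ∧ ξU ω = u} := by
    ext ω; simp only [Set.mem_setOf_eq, Prod.mk.injEq]
  have g4 : {ω | ξZ ω = z ∧ (ξY ω, ξU ω) = (y, u)}
      = {ω | ξY ω = y ∧ ξZ ω = z ∧ ξU ω = u} := by
    ext ω; simp only [Set.mem_setOf_eq, Prod.mk.injEq]; tauto
  rw [g1, g2, g3, g4]
  refine (ENNReal.toReal_eq_toReal_iff' ?_ ?_).mp ?_
  · exact ENNReal.mul_ne_top (measure_ne_top μ _) (measure_ne_top μ _)
  · exact ENNReal.mul_ne_top (measure_ne_top μ _) (measure_ne_top μ _)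
  · rw [ENNReal.toReal_mul, ENNReal.toReal_mul]
    exact main x y z u
end

section
/- Counterexample to the sixth potential conditional Ingleton inequality: there exist four binary random variables ξ_X, ξ_Y, ξ_Z, ξ_U on a common probability space (for instance, with joint density on {0,1}^4 given by p(0,0,0,0) = p(1,1,1,1) = 18/64, p(0,1,0,0) = p(1,0,0,0) = p(0,1,1,1) = p(1,0,1,1) = 3/64, p(0,1,0,1) = p(1,0,1,0) = 1/64, p(0,1,1,0) = p(1,0,0,1) = 7/64, and 0 otherwise) such that ξ_X ⊥ ξ_Z | ξ_U and ξ_Y ⊥ ξ_U | ξ_Z hold, yet the entropy function h of these variables satisfies □h(X,Y) < 0. -/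
open MeasureTheory

/-- The Ingleton expression □h(X,Y) for the entropy function `h` of the four
discrete random variables `ξX, ξY, ξZ, ξU` (entropies of joint sub-vectors). -/
noncomputable def ingletonEnt {Ω SX SY SZ SU : Type*} [MeasurableSpace Ω]
    [Fintype SX] [Fintype SY] [Fintype SZ] [Fintype SU] (μ : Measure Ω)
    (ξX : Ω → SX) (ξY : Ω → SY) (ξZ : Ω → SZ) (ξU : Ω → SU) : ℝ :=
  - entropyOf μ (fun ω => (ξX ω, ξY ω)) + entropyOf μ (fun ω => (ξX ω, ξZ ω))
  + entropyOf μ (fun ω => (ξX ω, ξU ω)) + entropyOf μ (fun ω => (ξY ω, ξZ ω))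
  + entropyOf μ (fun ω => (ξY ω, ξU ω)) + entropyOf μ (fun ω => (ξZ ω, ξU ω))
  - entropyOf μ ξZ - entropyOf μ ξU
  - entropyOf μ (fun ω => (ξX ω, ξZ ω, ξU ω)) - entropyOf μ (fun ω => (ξY ω, ξZ ω, ξU ω))


open scoped ENNReal

namespace SixthIngleton

abbrev Om : Type := Bool × Bool × Bool × Bool

def wt : Om → ℕ
  | (false, false, false, false) => 18
  | (true, true, true, true) => 18
  | (false, true, false, false) => 3
  | (true, false, false, false) => 3
  | (false, true, true, true) => 3
  | (true, false, true, true) => 3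
  | (false, true, false, true) => 1
  | (true, false, true, false) => 1
  | (false, true, true, false) => 7
  | (true, false, false, true) => 7
  | _ => 0

def vX : Om → Bool := fun ω => ω.1
def vY : Om → Bool := fun ω => ω.2.1
def vZ : Om → Bool := fun ω => ω.2.2.1
def vU : Om → Bool := fun ω => ω.2.2.2

noncomputable def nu : Measure Om := ∑ ω : Om, (wt ω : ℝ≥0∞) • Measure.dirac ω

noncomputable def mu : Measure Om := (64 : ℝ≥0∞)⁻¹ • nu

lemma nu_setOf (q : Om → Prop) [DecidablePred q] :
    nu {ω | q ω} = ((((Finset.univ.filter q).sum wt) : ℕ) : ℝ≥0∞) := by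
  rw [nu, Measure.finset_sum_apply]
  simp only [Measure.smul_apply, Measure.dirac_apply' _ MeasurableSet.of_discrete,
    smul_eq_mul, Set.indicator_apply, Set.mem_setOf_eq]
  rw [Finset.sum_filter, Nat.cast_sum]
  apply Finset.sum_congr rfl
  intro ω _
  by_cases h : q ω <;> simp [h]

lemma mu_setOf (q : Om → Prop) [DecidablePred q] :
    mu {ω | q ω} = ((((Finset.univ.filter q).sum wt) : ℕ) : ℝ≥0∞) / 64 := by
  rw [mu, Measure.smul_apply, nu_setOf, smul_eq_mul, ENNReal.div_eq_inv_mul]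

lemma key {a b c d : ℕ} (h : a * b = c * d) :
    ((a : ℝ≥0∞)/64) * ((b : ℝ≥0∞)/64) = ((c : ℝ≥0∞)/64) * ((d : ℝ≥0∞)/64) := by
  rw [div_eq_mul_inv, div_eq_mul_inv, div_eq_mul_inv, div_eq_mul_inv,
    mul_mul_mul_comm, ← Nat.cast_mul, h, Nat.cast_mul, ← mul_mul_mul_comm]

lemma prob_eq {S : Type*} [DecidableEq S] (f : Om → S) (x : S) (k : ℕ)
    (h : (Finset.univ.filter (fun ω => f ω = x)).sum wt = k) :
    probOf mu f x = (k : ℝ) / 64 := by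
  rw [probOf, mu_setOf (fun ω => f ω = x), h]
  rw [ENNReal.toReal_div]
  norm_num

instance : IsProbabilityMeasure mu := by
  constructor
  rw [show (Set.univ : Set Om) = {ω | True} from rfl, mu_setOf]
  rw [show (Finset.univ.filter (fun _ : Om => True)).sum wt = 64 from by decide]
  simp
  norm_num [ENNReal.div_self]

lemma condXZU : CondIndepRV mu vX vZ vU := by
  intro a b c
  cases a <;> cases b <;> cases c <;>
    (rw [mu_setOf, mu_setOf, mu_setOf, mu_setOf]; apply key; decide)

lemma condYUZ : CondIndepRV mu vY vU vZ := by
  intro a b c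
  cases a <;> cases b <;> cases c <;>
    (rw [mu_setOf, mu_setOf, mu_setOf, mu_setOf]; apply key; decide)

lemma ingleton_neg : ingletonEnt mu vX vY vZ vU < 0 := by
  rw [ingletonEnt]
  simp only [entropyOf, Fintype.sum_prod_type, Fintype.sum_bool]
  rw [prob_eq (fun ω => (vX ω, vY ω)) (true, true) 18 (by decide)]
  rw [prob_eq (fun ω => (vX ω, vY ω)) (true, false) 14 (by decide)]
  rw [prob_eq (fun ω => (vX ω, vY ω)) (false, true) 14 (by decide)]
  rw [prob_eq (fun ω => (vX ω, vY ω)) (false, false) 18 (by decide)]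
  rw [prob_eq (fun ω => (vX ω, vZ ω)) (true, true) 22 (by decide)]
  rw [prob_eq (fun ω => (vX ω, vZ ω)) (true, false) 10 (by decide)]
  rw [prob_eq (fun ω => (vX ω, vZ ω)) (false, true) 10 (by decide)]
  rw [prob_eq (fun ω => (vX ω, vZ ω)) (false, false) 22 (by decide)]
  rw [prob_eq (fun ω => (vX ω, vU ω)) (true, true) 28 (by decide)]
  rw [prob_eq (fun ω => (vX ω, vU ω)) (true, false) 4 (by decide)]
  rw [prob_eq (fun ω => (vX ω, vU ω)) (false, true) 4 (by decide)]
  rw [prob_eq (fun ω => (vX ω, vU ω)) (false, false) 28 (by decide)]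
  rw [prob_eq (fun ω => (vY ω, vZ ω)) (true, true) 28 (by decide)]
  rw [prob_eq (fun ω => (vY ω, vZ ω)) (true, false) 4 (by decide)]
  rw [prob_eq (fun ω => (vY ω, vZ ω)) (false, true) 4 (by decide)]
  rw [prob_eq (fun ω => (vY ω, vZ ω)) (false, false) 28 (by decide)]
  rw [prob_eq (fun ω => (vY ω, vU ω)) (true, true) 22 (by decide)]
  rw [prob_eq (fun ω => (vY ω, vU ω)) (true, false) 10 (by decide)]
  rw [prob_eq (fun ω => (vY ω, vU ω)) (false, true) 10 (by decide)]
  rw [prob_eq (fun ω => (vY ω, vU ω)) (false, false) 22 (by decide)]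
  rw [prob_eq (fun ω => (vZ ω, vU ω)) (true, true) 24 (by decide)]
  rw [prob_eq (fun ω => (vZ ω, vU ω)) (true, false) 8 (by decide)]
  rw [prob_eq (fun ω => (vZ ω, vU ω)) (false, true) 8 (by decide)]
  rw [prob_eq (fun ω => (vZ ω, vU ω)) (false, false) 24 (by decide)]
  rw [prob_eq (vZ) true 32 (by decide)]
  rw [prob_eq (vZ) false 32 (by decide)]
  rw [prob_eq (vU) true 32 (by decide)]
  rw [prob_eq (vU) false 32 (by decide)]
  rw [prob_eq (fun ω => (vX ω, vZ ω, vU ω)) (true, true, true) 21 (by decide)]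
  rw [prob_eq (fun ω => (vX ω, vZ ω, vU ω)) (true, true, false) 1 (by decide)]
  rw [prob_eq (fun ω => (vX ω, vZ ω, vU ω)) (true, false, true) 7 (by decide)]
  rw [prob_eq (fun ω => (vX ω, vZ ω, vU ω)) (true, false, false) 3 (by decide)]
  rw [prob_eq (fun ω => (vX ω, vZ ω, vU ω)) (false, true, true) 3 (by decide)]
  rw [prob_eq (fun ω => (vX ω, vZ ω, vU ω)) (false, true, false) 7 (by decide)]
  rw [prob_eq (fun ω => (vX ω, vZ ω, vU ω)) (false, false, true) 1 (by decide)]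
  rw [prob_eq (fun ω => (vX ω, vZ ω, vU ω)) (false, false, false) 21 (by decide)]
  rw [prob_eq (fun ω => (vY ω, vZ ω, vU ω)) (true, true, true) 21 (by decide)]
  rw [prob_eq (fun ω => (vY ω, vZ ω, vU ω)) (true, true, false) 7 (by decide)]
  rw [prob_eq (fun ω => (vY ω, vZ ω, vU ω)) (true, false, true) 1 (by decide)]
  rw [prob_eq (fun ω => (vY ω, vZ ω, vU ω)) (true, false, false) 3 (by decide)]
  rw [prob_eq (fun ω => (vY ω, vZ ω, vU ω)) (false, true, true) 3 (by decide)]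
  rw [prob_eq (fun ω => (vY ω, vZ ω, vU ω)) (false, true, false) 1 (by decide)]
  rw [prob_eq (fun ω => (vY ω, vZ ω, vU ω)) (false, false, true) 7 (by decide)]
  rw [prob_eq (fun ω => (vY ω, vZ ω, vU ω)) (false, false, false) 21 (by decide)]
  simp only [Real.negMulLog]
  push_cast
  have lg1 : Real.log ((1:ℝ)/64) = -(6 * Real.log 2) := by
    rw [show ((1:ℝ)/64) = ((1:ℝ)) / 2^6 by norm_num]
    rw [Real.log_div (by positivity) (by positivity)]
    simp only [Real.log_pow, Real.log_one]
    push_cast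
    ring
  have lg3 : Real.log ((3:ℝ)/64) = 1 * Real.log 3 - 6 * Real.log 2 := by
    rw [show ((3:ℝ)/64) = ((3:ℝ)^1) / 2^6 by norm_num]
    rw [Real.log_div (by positivity) (by positivity)]
    simp only [Real.log_pow, Real.log_one]
    push_cast
    ring
  have lg4 : Real.log ((4:ℝ)/64) = 2 * Real.log 2 - 6 * Real.log 2 := by
    rw [show ((4:ℝ)/64) = ((2:ℝ)^2) / 2^6 by norm_num]
    rw [Real.log_div (by positivity) (by positivity)]
    simp only [Real.log_pow, Real.log_one]
    push_cast
    ring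
  have lg7 : Real.log ((7:ℝ)/64) = 1 * Real.log 7 - 6 * Real.log 2 := by
    rw [show ((7:ℝ)/64) = ((7:ℝ)^1) / 2^6 by norm_num]
    rw [Real.log_div (by positivity) (by positivity)]
    simp only [Real.log_pow, Real.log_one]
    push_cast
    ring
  have lg8 : Real.log ((8:ℝ)/64) = 3 * Real.log 2 - 6 * Real.log 2 := by
    rw [show ((8:ℝ)/64) = ((2:ℝ)^3) / 2^6 by norm_num]
    rw [Real.log_div (by positivity) (by positivity)]
    simp only [Real.log_pow, Real.log_one]
    push_cast
    ring
  have lg10 : Real.log ((10:ℝ)/64) = 1 * Real.log 2 + 1 * Real.log 5 - 6 * Real.log 2 := by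
    rw [show ((10:ℝ)/64) = ((2:ℝ)^1 * (5:ℝ)^1) / 2^6 by norm_num]
    rw [Real.log_div (by positivity) (by positivity)]
    rw [Real.log_mul (by positivity) (by positivity)]
    simp only [Real.log_pow, Real.log_one]
    push_cast
    ring
  have lg14 : Real.log ((14:ℝ)/64) = 1 * Real.log 2 + 1 * Real.log 7 - 6 * Real.log 2 := by
    rw [show ((14:ℝ)/64) = ((2:ℝ)^1 * (7:ℝ)^1) / 2^6 by norm_num]
    rw [Real.log_div (by positivity) (by positivity)]
    rw [Real.log_mul (by positivity) (by positivity)]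
    simp only [Real.log_pow, Real.log_one]
    push_cast
    ring
  have lg18 : Real.log ((18:ℝ)/64) = 1 * Real.log 2 + 2 * Real.log 3 - 6 * Real.log 2 := by
    rw [show ((18:ℝ)/64) = ((2:ℝ)^1 * (3:ℝ)^2) / 2^6 by norm_num]
    rw [Real.log_div (by positivity) (by positivity)]
    rw [Real.log_mul (by positivity) (by positivity)]
    simp only [Real.log_pow, Real.log_one]
    push_cast
    ring
  have lg21 : Real.log ((21:ℝ)/64) = 1 * Real.log 3 + 1 * Real.log 7 - 6 * Real.log 2 := by
    rw [show ((21:ℝ)/64) = ((3:ℝ)^1 * (7:ℝ)^1) / 2^6 by norm_num]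
    rw [Real.log_div (by positivity) (by positivity)]
    rw [Real.log_mul (by positivity) (by positivity)]
    simp only [Real.log_pow, Real.log_one]
    push_cast
    ring
  have lg22 : Real.log ((22:ℝ)/64) = 1 * Real.log 2 + 1 * Real.log 11 - 6 * Real.log 2 := by
    rw [show ((22:ℝ)/64) = ((2:ℝ)^1 * (11:ℝ)^1) / 2^6 by norm_num]
    rw [Real.log_div (by positivity) (by positivity)]
    rw [Real.log_mul (by positivity) (by positivity)]
    simp only [Real.log_pow, Real.log_one]
    push_cast
    ring
  have lg24 : Real.log ((24:ℝ)/64) = 3 * Real.log 2 + 1 * Real.log 3 - 6 * Real.log 2 := by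
    rw [show ((24:ℝ)/64) = ((2:ℝ)^3 * (3:ℝ)^1) / 2^6 by norm_num]
    rw [Real.log_div (by positivity) (by positivity)]
    rw [Real.log_mul (by positivity) (by positivity)]
    simp only [Real.log_pow, Real.log_one]
    push_cast
    ring
  have lg28 : Real.log ((28:ℝ)/64) = 2 * Real.log 2 + 1 * Real.log 7 - 6 * Real.log 2 := by
    rw [show ((28:ℝ)/64) = ((2:ℝ)^2 * (7:ℝ)^1) / 2^6 by norm_num]
    rw [Real.log_div (by positivity) (by positivity)]
    rw [Real.log_mul (by positivity) (by positivity)]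
    simp only [Real.log_pow, Real.log_one]
    push_cast
    ring
  have lg32 : Real.log ((32:ℝ)/64) = 5 * Real.log 2 - 6 * Real.log 2 := by
    rw [show ((32:ℝ)/64) = ((2:ℝ)^5) / 2^6 by norm_num]
    rw [Real.log_div (by positivity) (by positivity)]
    simp only [Real.log_pow, Real.log_one]
    push_cast
    ring
  rw [lg1, lg3, lg4, lg7, lg8, lg10, lg14, lg18, lg21, lg22, lg24, lg28, lg32]
  have A : Real.log ((2:ℝ)^32 * 3^30 * 7^7) < Real.log ((11:ℝ)^22 * 5^10) :=
    Real.log_lt_log (by positivity) (by norm_num)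
  rw [Real.log_mul (by positivity) (by positivity), Real.log_mul (by positivity) (by positivity),
    Real.log_mul (by positivity) (by positivity),
    Real.log_pow, Real.log_pow, Real.log_pow, Real.log_pow, Real.log_pow] at A
  push_cast at A
  linarith

end SixthIngleton

/-- a counter-example to the sixth potential conditional Ingleton
inequality. There are four binary random variables with ξ_X ⊥ ξ_Z | ξ_U and
ξ_Y ⊥ ξ_U | ξ_Z whose entropy function satisfies □h(X,Y) < 0. -/
theorem counterexample_sixth_conditional_ingleton :
    ∃ (Ω : Type) (_ : MeasurableSpace Ω) (μ : Measure Ω) (_ : IsProbabilityMeasure μ)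
      (ξX ξY ξZ ξU : Ω → Bool),
      Measurable ξX ∧ Measurable ξY ∧ Measurable ξZ ∧ Measurable ξU ∧
      CondIndepRV μ ξX ξZ ξU ∧ CondIndepRV μ ξY ξU ξZ ∧
      ingletonEnt μ ξX ξY ξZ ξU < 0 :=
  ⟨SixthIngleton.Om, inferInstance, SixthIngleton.mu, inferInstance,
    SixthIngleton.vX, SixthIngleton.vY, SixthIngleton.vZ, SixthIngleton.vU,
    Measurable.of_discrete, Measurable.of_discrete, Measurable.of_discrete,
    Measurable.of_discrete, SixthIngleton.condXZU, SixthIngleton.condYUZ,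
    SixthIngleton.ingleton_neg⟩
end
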